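/- arXiv:2411.01695 — 10 statements merged into one kernel-verified Lean document; each statement's English description precedes it below -/
import Mathlib

section
/- Let B be a prime Banach algebra over ℝ, let H₁ and H₂ be non-empty open subsets of B, and let f : B → B be a continuous automorphism. Suppose that for every (x, y) ∈ H₁ × H₂ there exist positive integers p = p(x,y) ≥ 1 and q = q(x,y) ≥ 1 (depending on x and y) such that f(xᵖyᵠ) + xᵖ∘yᵠ ∈ Z(B). Then B is commutative. -/
open Finset

section Aux

private lemma real_poly_coeffs_zero {n : ℕ} {a : ℕ → ℝ} {s : Set ℝ} (hs : s.Infinite)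
    (h : ∀ t ∈ s, ∑ k ∈ range n, a k * t ^ k = 0) : ∀ k, k < n → a k = 0 := by
  intro k hk
  set p : Polynomial ℝ := ∑ k ∈ range n, Polynomial.C (a k) * Polynomial.X ^ k with hp
  have hev : ∀ t, p.eval t = ∑ k ∈ range n, a k * t ^ k := by
    intro t; simp [hp, Polynomial.eval_finset_sum]
  have hp0 : p = 0 := by
    apply Polynomial.eq_zero_of_infinite_isRoot
    apply hs.mono
    intro t ht
    simp only [Set.mem_setOf_eq, Polynomial.IsRoot, hev]
    exact h t ht
  have : p.coeff k = a k := by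
    simp [hp, Polynomial.finset_sum_coeff, Polynomial.coeff_C_mul, Polynomial.coeff_X_pow,
      Finset.sum_ite_eq' (range n) k, hk]
  rw [hp0] at this
  simpa using this.symm

variable {B : Type*} [NormedRing B] [NormedAlgebra ℝ B]

private lemma vec_coeffs_zero
    {n : ℕ} {c : ℕ → B} {s : Set ℝ} (hs : s.Infinite)
    (h : ∀ t ∈ s, ∑ k ∈ range n, t ^ k • c k = 0) : ∀ k, k < n → c k = 0 := by
  intro k hk
  refine NormedSpace.eq_zero_of_forall_dual_eq_zero ℝ fun ℓ => ?_
  refine real_poly_coeffs_zero (a := fun k => ℓ (c k)) hs (fun t ht => ?_) k hk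
  have := congrArg ℓ (h t ht)
  simpa [map_sum, mul_comm] using this

private def IsPolyFun (g : ℝ → B) : Prop :=
  ∃ n : ℕ, ∃ c : ℕ → B, ∀ t, g t = ∑ k ∈ range n, t ^ k • c k

private lemma isPolyFun_const (a : B) : IsPolyFun (fun _ => a) :=
  ⟨1, fun _ => a, by simp⟩

private lemma isPolyFun_affine (a d : B) : IsPolyFun (fun t => a + t • d) := by
  refine ⟨2, fun k => if k = 0 then a else if k = 1 then d else 0, fun t => ?_⟩
  simp [Finset.sum_range_succ]

private lemma pad_sum {t : ℝ} (c : ℕ → B) {n N : ℕ} (hnN : n ≤ N) :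
    ∑ k ∈ range N, t ^ k • (if k < n then c k else 0) = ∑ k ∈ range n, t ^ k • c k := by
  rw [← Finset.sum_subset (Finset.range_subset_range.2 hnN) (fun k _ hk => ?_)]
  · exact Finset.sum_congr rfl fun k hk => by rw [if_pos (Finset.mem_range.1 hk)]
  · rw [if_neg (by simpa using hk), smul_zero]

private lemma IsPolyFun.add {g h : ℝ → B} (hg : IsPolyFun g) (hh : IsPolyFun h) :
    IsPolyFun (fun t => g t + h t) := by
  obtain ⟨n, c, hc⟩ := hg
  obtain ⟨m, d, hd⟩ := hh
  refine ⟨max n m, fun k => (if k < n then c k else 0) + (if k < m then d k else 0), fun t => ?_⟩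
  show g t + h t = _
  simp only [smul_add, Finset.sum_add_distrib, pad_sum c (le_max_left n m),
    pad_sum d (le_max_right n m)]
  rw [hc, hd]

private lemma IsPolyFun.mul {g h : ℝ → B} (hg : IsPolyFun g) (hh : IsPolyFun h) :
    IsPolyFun (fun t => g t * h t) := by
  obtain ⟨n, c, hc⟩ := hg
  obtain ⟨m, d, hd⟩ := hh
  refine ⟨n + m, fun k => ∑ i ∈ range n, ∑ j ∈ range m,
    if i + j = k then c i * d j else 0, fun t => ?_⟩
  show g t * h t = _
  rw [hc, hd, Finset.sum_mul_sum]
  simp only [Finset.smul_sum, smul_ite, smul_zero]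
  symm
  rw [Finset.sum_comm]
  refine Finset.sum_congr rfl fun i hi => ?_
  rw [Finset.sum_comm]
  refine Finset.sum_congr rfl fun j hj => ?_
  rw [Finset.sum_ite_eq (range (n + m)) (i + j) (fun k => t ^ k • (c i * d j)),
    if_pos (Finset.mem_range.2 (Nat.add_lt_add (Finset.mem_range.1 hi) (Finset.mem_range.1 hj))),
    smul_mul_smul_comm, ← pow_add]

private lemma IsPolyFun.map {g : ℝ → B} (hg : IsPolyFun g) (L : B → B)
    (hadd : ∀ a b, L (a + b) = L a + L b) (hsmul : ∀ (r : ℝ) a, L (r • a) = r • L a) :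
    IsPolyFun (fun t => L (g t)) := by
  obtain ⟨n, c, hc⟩ := hg
  have hL : ⇑(AddMonoidHom.mk' L hadd : B →+ B) = L := rfl
  refine ⟨n, fun k => L (c k), fun t => ?_⟩
  show L (g t) = _
  rw [hc, ← hL, map_sum]
  exact Finset.sum_congr rfl fun k _ => hsmul _ _

private lemma IsPolyFun.pow {g : ℝ → B} (hg : IsPolyFun g) (p : ℕ) :
    IsPolyFun (fun t => g t ^ p) := by
  induction p with
  | zero => simpa using isPolyFun_const (1 : B)
  | succ p ih => simpa [pow_succ] using ih.mul hg

private lemma IsPolyFun.eq_zero_everywhere {g : ℝ → B} (hg : IsPolyFun g) {s : Set ℝ}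
    (hs : s.Infinite) (h : ∀ t ∈ s, g t = 0) : ∀ t, g t = 0 := by
  obtain ⟨n, c, hc⟩ := hg
  have h0 : ∀ k, k < n → c k = 0 :=
    vec_coeffs_zero hs (fun t ht => by rw [← hc]; exact h t ht)
  intro t
  rw [hc]
  exact Finset.sum_eq_zero fun k hk => by rw [h0 k (Finset.mem_range.1 hk), smul_zero]

private lemma extend_open (G : B → B)
    (hpoly : ∀ a d : B, IsPolyFun (fun t => G (a + t • d)))
    {U : Set B} (hUo : IsOpen U) {x₀ : B} (hx₀ : x₀ ∈ U)
    (hzero : ∀ x ∈ U, G x = 0) : ∀ x, G x = 0 := by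
  intro x
  obtain ⟨ε, hε, hball⟩ := Metric.isOpen_iff.1 hUo x₀ hx₀
  set d := x - x₀ with hd
  set δ := ε / (‖d‖ + 1) with hδdef
  have hδ : 0 < δ := div_pos hε (by positivity)
  have hmem : ∀ t ∈ Set.Ioo (-δ) δ, x₀ + t • d ∈ U := by
    intro t ht
    apply hball
    rw [Metric.mem_ball, dist_eq_norm, add_sub_cancel_left, norm_smul]
    have h1 : |t| < δ := abs_lt.2 ⟨ht.1, ht.2⟩
    have h2 : δ * (‖d‖ + 1) = ε := div_mul_cancel₀ ε (by positivity)
    have h3 : (0:ℝ) ≤ ‖d‖ := norm_nonneg d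
    calc ‖t‖ * ‖d‖ ≤ |t| * (‖d‖ + 1) := by
          rw [Real.norm_eq_abs]
          exact mul_le_mul_of_nonneg_left (by linarith) (abs_nonneg t)
      _ < δ * (‖d‖ + 1) := mul_lt_mul_of_pos_right h1 (by positivity)
      _ = ε := h2
  have := (hpoly x₀ d).eq_zero_everywhere (Set.Ioo_infinite (by linarith))
    (fun t ht => hzero _ (hmem t ht)) 1
  simpa [hd] using this

private lemma nsmul_cancel {P : ℕ} (hP : 0 < P) {a : B} (h : P • a = 0) : a = 0 := by
  have h2 : (P : ℝ) • a = 0 := by rw [Nat.cast_smul_eq_nsmul]; exact h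
  have h3 := congrArg (fun w => (P:ℝ)⁻¹ • w) h2
  simpa [smul_smul, inv_mul_cancel₀ (show (P:ℝ) ≠ 0 by positivity)] using h3

private lemma coeff_one_zero (L : B →+ B) (hLs : ∀ (r : ℝ) (a : B), L (r • a) = r • L a)
    (P : ℕ) (hP : 0 < P) (x : B)
    (h : ∀ t : ℝ, L ((1 + t • x) ^ P) = 0) : L x = 0 := by
  have expand : ∀ t : ℝ, (1 + t • x) ^ P
      = ∑ m ∈ range (P + 1), t ^ m • ((P.choose m) • x ^ m) := by
    intro t
    rw [add_comm, (Commute.one_right (t • x)).add_pow]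
    refine Finset.sum_congr rfl fun m hm => ?_
    rw [one_pow, mul_one, smul_pow, nsmul_eq_mul, smul_mul_assoc,
      (Nat.commute_cast (x ^ m) (P.choose m)).eq]
  have hz : ∀ t : ℝ, ∑ m ∈ range (P + 1), t ^ m • ((P.choose m) • L (x ^ m)) = 0 := by
    intro t
    rw [← h t, expand t, map_sum]
    exact Finset.sum_congr rfl fun m _ => by rw [hLs, map_nsmul]
  have := vec_coeffs_zero (s := Set.univ) Set.infinite_univ (fun t _ => hz t) 1 (by omega)
  rw [Nat.choose_one_right, pow_one] at this
  exact nsmul_cancel hP this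

end Aux

/-- Theorem: a prime real Banach algebra admitting a continuous automorphism `f` with
`f(x^p y^q) + x^p ∘ y^q ∈ Z(B)` on a product of nonempty open sets is commutative. -/
theorem prime_banach_comm_of_auto_mul_add_anticomm
    {B : Type*} [NormedRing B] [NormedAlgebra ℝ B] [CompleteSpace B]
    (hprime : ∀ x y : B, (∀ z : B, x * z * y = 0) → x = 0 ∨ y = 0)
    (H₁ H₂ : Set B) (hH₁ : H₁.Nonempty) (hH₂ : H₂.Nonempty)
    (hH₁o : IsOpen H₁) (hH₂o : IsOpen H₂)
    (f : B → B) (hfcont : Continuous f) (hfbij : Function.Bijective f)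
    (hfadd : ∀ x y : B, f (x + y) = f x + f y)
    (hfmul : ∀ x y : B, f (x * y) = f x * f y)
    (hmain : ∀ x ∈ H₁, ∀ y ∈ H₂, ∃ p q : ℕ, 0 < p ∧ 0 < q ∧
      ∀ b : B, (f (x ^ p * y ^ q) + (x ^ p * y ^ q + y ^ q * x ^ p)) * b
        = b * (f (x ^ p * y ^ q) + (x ^ p * y ^ q + y ^ q * x ^ p))) :
    ∀ x y : B, x * y = y * x := by
  classical
  -- ℝ-linearity of f
  have hfsmul : ∀ (r : ℝ) (x : B), f (r • x) = r • f x := by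
    intro r x
    have hco : (⇑((AddMonoidHom.mk' f hfadd).toRealLinearMap hfcont)) = f :=
      AddMonoidHom.coe_toRealLinearMap _ _
    rw [← hco]
    exact map_smul _ r x
  -- Baire category step
  have hEcont : ∀ (p q : ℕ) (b : B), Continuous (fun z : B × B =>
      (f (z.1 ^ p * z.2 ^ q) + (z.1 ^ p * z.2 ^ q + z.2 ^ q * z.1 ^ p)) * b
      - b * (f (z.1 ^ p * z.2 ^ q) + (z.1 ^ p * z.2 ^ q + z.2 ^ q * z.1 ^ p))) := by
    intro p q b
    have h1 : Continuous fun z : B × B => z.1 ^ p * z.2 ^ q :=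
      (continuous_fst.pow p).mul (continuous_snd.pow q)
    have h2 : Continuous fun z : B × B => z.2 ^ q * z.1 ^ p :=
      (continuous_snd.pow q).mul (continuous_fst.pow p)
    have h3 : Continuous fun z : B × B =>
        f (z.1 ^ p * z.2 ^ q) + (z.1 ^ p * z.2 ^ q + z.2 ^ q * z.1 ^ p) :=
      (hfcont.comp h1).add (h1.add h2)
    exact (h3.mul continuous_const).sub (continuous_const.mul h3)
  have key : ∃ (P Q : ℕ) (U V : Set B), 0 < P ∧ 0 < Q ∧ IsOpen U ∧ IsOpen V ∧
      U.Nonempty ∧ V.Nonempty ∧ ∀ x ∈ U, ∀ y ∈ V, ∀ b : B,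
      (f (x ^ P * y ^ Q) + (x ^ P * y ^ Q + y ^ Q * x ^ P)) * b
        = b * (f (x ^ P * y ^ Q) + (x ^ P * y ^ Q + y ^ Q * x ^ P)) := by
    set C : ℕ × ℕ → Set (B × B) := fun pq => ⋂ b : B, {z : B × B |
      (f (z.1 ^ (pq.1+1) * z.2 ^ (pq.2+1))
        + (z.1 ^ (pq.1+1) * z.2 ^ (pq.2+1) + z.2 ^ (pq.2+1) * z.1 ^ (pq.1+1))) * b
      - b * (f (z.1 ^ (pq.1+1) * z.2 ^ (pq.2+1))
        + (z.1 ^ (pq.1+1) * z.2 ^ (pq.2+1) + z.2 ^ (pq.2+1) * z.1 ^ (pq.1+1))) = 0} with hC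
    have hCc : ∀ pq, IsClosed (C pq) := fun pq =>
      isClosed_iInter fun b => isClosed_eq (hEcont _ _ b) continuous_const
    set D : ℕ × ℕ → Set (B × B) := fun pq => C pq ∪ (H₁ ×ˢ H₂)ᶜ with hD
    have hDc : ∀ pq, IsClosed (D pq) := fun pq =>
      (hCc pq).union (hH₁o.prod hH₂o).isClosed_compl
    have hcover : ⋃ pq, D pq = Set.univ := by
      ext z
      simp only [Set.mem_iUnion, Set.mem_univ, iff_true]
      by_cases hz : z ∈ H₁ ×ˢ H₂
      · obtain ⟨p, q, hp, hq, hb⟩ := hmain z.1 hz.1 z.2 hz.2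
        refine ⟨(p - 1, q - 1), Or.inl ?_⟩
        simp only [hC, Set.mem_iInter, Set.mem_setOf_eq]
        intro b
        have hp1 : p - 1 + 1 = p := Nat.succ_pred_eq_of_pos hp
        have hq1 : q - 1 + 1 = q := Nat.succ_pred_eq_of_pos hq
        rw [hp1, hq1, sub_eq_zero]
        exact hb b
      · exact ⟨(0, 0), Or.inr hz⟩
    have hdense := dense_iUnion_interior_of_closed hDc hcover
    obtain ⟨z₀, hz₀s, hz₀o⟩ := hdense.exists_mem_open (hH₁o.prod hH₂o) (hH₁.prod hH₂)
    obtain ⟨pq, hpq⟩ := Set.mem_iUnion.1 hz₀s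
    have hWo : IsOpen (interior (D pq) ∩ H₁ ×ˢ H₂) := isOpen_interior.inter (hH₁o.prod hH₂o)
    have hz₀W : z₀ ∈ interior (D pq) ∩ H₁ ×ˢ H₂ := ⟨hpq, hz₀o⟩
    have hWC : interior (D pq) ∩ H₁ ×ˢ H₂ ⊆ C pq := by
      rintro z ⟨hz1, hz2⟩
      rcases interior_subset hz1 with h | h
      · exact h
      · exact absurd hz2 h
    obtain ⟨U, V, hUo, hVo, hxU, hyV, hUV⟩ :=
      isOpen_prod_iff.1 hWo z₀.1 z₀.2 (by simpa using hz₀W)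
    refine ⟨pq.1 + 1, pq.2 + 1, U, V, Nat.succ_pos _, Nat.succ_pos _, hUo, hVo,
      ⟨z₀.1, hxU⟩, ⟨z₀.2, hyV⟩, ?_⟩
    intro x hx y hy b
    have hmem := hWC (hUV (Set.mk_mem_prod hx hy))
    have := Set.mem_iInter.1 hmem b
    exact sub_eq_zero.1 this
  obtain ⟨P, Q, U, V, hP, hQ, hUo, hVo, ⟨x₀, hx₀⟩, ⟨y₀, hy₀⟩, hUV⟩ := key
  -- extend in x
  have stepA : ∀ y ∈ V, ∀ (x b : B),
      (f (x ^ P * y ^ Q) + (x ^ P * y ^ Q + y ^ Q * x ^ P)) * b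
        = b * (f (x ^ P * y ^ Q) + (x ^ P * y ^ Q + y ^ Q * x ^ P)) := by
    intro y hy x b
    have hx := extend_open (fun w => (f (w ^ P * y ^ Q) + (w ^ P * y ^ Q + y ^ Q * w ^ P)) * b
        - b * (f (w ^ P * y ^ Q) + (w ^ P * y ^ Q + y ^ Q * w ^ P))) ?_ hUo hx₀ ?_ x
    · exact sub_eq_zero.1 hx
    · intro a d
      exact ((isPolyFun_affine a d).pow P).map
        (fun v => (f (v * y ^ Q) + (v * y ^ Q + y ^ Q * v)) * b
          - b * (f (v * y ^ Q) + (v * y ^ Q + y ^ Q * v)))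
        (fun u v => by simp only [add_mul, mul_add, hfadd]; noncomm_ring)
        (fun r a' => by
          simp only [smul_mul_assoc, mul_smul_comm, hfsmul, ← smul_add, ← smul_sub])
    · intro w hw
      rw [sub_eq_zero]
      exact hUV w hw y hy b
  -- extend in y
  have stepB : ∀ (x y b : B),
      (f (x ^ P * y ^ Q) + (x ^ P * y ^ Q + y ^ Q * x ^ P)) * b
        = b * (f (x ^ P * y ^ Q) + (x ^ P * y ^ Q + y ^ Q * x ^ P)) := by
    intro x y b
    have hx := extend_open (fun w => (f (x ^ P * w ^ Q) + (x ^ P * w ^ Q + w ^ Q * x ^ P)) * b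
        - b * (f (x ^ P * w ^ Q) + (x ^ P * w ^ Q + w ^ Q * x ^ P))) ?_ hVo hy₀ ?_ y
    · exact sub_eq_zero.1 hx
    · intro a d
      exact ((isPolyFun_affine a d).pow Q).map
        (fun v => (f (x ^ P * v) + (x ^ P * v + v * x ^ P)) * b
          - b * (f (x ^ P * v) + (x ^ P * v + v * x ^ P)))
        (fun u v => by simp only [add_mul, mul_add, hfadd]; noncomm_ring)
        (fun r a' => by
          simp only [smul_mul_assoc, mul_smul_comm, hfsmul, ← smul_add, ← smul_sub])
    · intro w hw
      rw [sub_eq_zero]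
      exact stepA w hw x b
  -- linearize in x
  have G1 : ∀ (x y b : B), (f (x * y ^ Q) + (x * y ^ Q + y ^ Q * x)) * b
      = b * (f (x * y ^ Q) + (x * y ^ Q + y ^ Q * x)) := by
    intro x y b
    refine sub_eq_zero.1 (coeff_one_zero (AddMonoidHom.mk'
      (fun w => (f (w * y ^ Q) + (w * y ^ Q + y ^ Q * w)) * b
        - b * (f (w * y ^ Q) + (w * y ^ Q + y ^ Q * w))) ?_) ?_ P hP x ?_)
    · intro u v; simp only [add_mul, mul_add, hfadd]; noncomm_ring
    · intro r a
      simp only [AddMonoidHom.mk'_apply, smul_mul_assoc, mul_smul_comm, hfsmul,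
        ← smul_add, ← smul_sub]
    · intro t
      show (f ((1 + t • x) ^ P * y ^ Q) + ((1 + t • x) ^ P * y ^ Q + y ^ Q * (1 + t • x) ^ P)) * b
        - b * (f ((1 + t • x) ^ P * y ^ Q)
          + ((1 + t • x) ^ P * y ^ Q + y ^ Q * (1 + t • x) ^ P)) = 0
      rw [sub_eq_zero]
      exact stepB (1 + t • x) y b
  -- linearize in y
  have G2 : ∀ (x y b : B), (f (x * y) + (x * y + y * x)) * b
      = b * (f (x * y) + (x * y + y * x)) := by
    intro x y b
    refine sub_eq_zero.1 (coeff_one_zero (AddMonoidHom.mk'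
      (fun w => (f (x * w) + (x * w + w * x)) * b
        - b * (f (x * w) + (x * w + w * x))) ?_) ?_ Q hQ y ?_)
    · intro u v; simp only [add_mul, mul_add, hfadd]; noncomm_ring
    · intro r a
      simp only [AddMonoidHom.mk'_apply, smul_mul_assoc, mul_smul_comm, hfsmul,
        ← smul_add, ← smul_sub]
    · intro t
      show (f (x * (1 + t • y) ^ Q) + (x * (1 + t • y) ^ Q + (1 + t • y) ^ Q * x)) * b
        - b * (f (x * (1 + t • y) ^ Q) + (x * (1 + t • y) ^ Q + (1 + t • y) ^ Q * x)) = 0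
      rw [sub_eq_zero]
      exact G1 x ((1 + t • y)) b
  -- algebra: commutators are central
  have hzc : ∀ (w b : B), (f w + (w + w)) * b = b * (f w + (w + w)) := by
    intro w b
    have := G2 w 1 b
    simpa using this
  have hcc : ∀ (x y b : B), (x * y - y * x) * b = b * (x * y - y * x) := by
    intro x y b
    have h1 := hzc (x * y) b
    have h2 := G2 x y b
    have h3 : ((f (x*y) + (x*y + x*y)) - (f (x*y) + (x*y + y*x))) * b
        = b * ((f (x*y) + (x*y + x*y)) - (f (x*y) + (x*y + y*x))) := by
      rw [sub_mul, mul_sub, h1, h2]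
    have h4 : (f (x*y) + (x*y + x*y)) - (f (x*y) + (x*y + y*x)) = x*y - y*x := by abel
    rwa [h4] at h3
  -- primeness finish
  intro x y
  set c := x * y - y * x with hcdef
  have hc : ∀ b, c * b = b * c := fun b => hcc x y b
  have hxc : ∀ b : B, x * c * b = b * (x * c) := by
    intro b
    have e1 : x * x * y - y * (x * x) = x * c + c * x := by rw [hcdef]; noncomm_ring
    have h5 := hcc (x * x) y b
    rw [e1, hc x] at h5
    have h6 : (x * c * b - b * (x * c)) + (x * c * b - b * (x * c))
        = (x * c + x * c) * b - b * (x * c + x * c) := by noncomm_ring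
    rw [h5, sub_self] at h6
    have h7 := nsmul_cancel (a := x * c * b - b * (x * c)) (by norm_num : (0:ℕ) < 2) (by rw [two_nsmul]; exact h6)
    exact sub_eq_zero.1 h7
  have hbc : ∀ b : B, (x * b - b * x) * c = 0 := by
    intro b
    have h8 : x * b * c = x * c * b := by rw [mul_assoc, ← hc b, ← mul_assoc]
    have h9 : b * x * c = x * c * b := by rw [mul_assoc]; exact (hxc b).symm
    rw [sub_mul, h8, h9, sub_self]
  have hcc0 : c * c = 0 := by
    have h := hbc y
    rwa [← hcdef] at h
  have hc0 : c = 0 := by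
    rcases hprime c c (fun z => by rw [hc z, mul_assoc, hcc0, mul_zero]) with h | h <;> exact h
  have h0 : x * y - y * x = 0 := by rw [← hcdef]; exact hc0
  exact sub_eq_zero.1 h0
end

section
/- Let B be a prime Banach algebra over ℝ, let H₁ and H₂ be non-empty open subsets of B, and let f : B → B be a continuous automorphism. Suppose that for every (x, y) ∈ H₁ × H₂ there exist positive integers p = p(x,y) ≥ 1 and q = q(x,y) ≥ 1 such that f(xᵖ∘yᵠ) + [xᵖ, yᵠ] ∈ Z(B). Then B is commutative. -/
open Finset Set Metric

section helpers
variable {B : Type*} [NormedRing B] [NormedAlgebra ℝ B]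

/-- A `B`-valued polynomial function vanishing on an interval has zero coefficients. -/
lemma aux_poly_zero : ∀ (n : ℕ) (a : ℕ → B) (ε : ℝ), 0 < ε →
    (∀ t ∈ Set.Ioo (-ε) ε, ∑ k ∈ Finset.range n, t ^ k • a k = 0) →
    ∀ k < n, a k = 0 := by
  intro n
  induction n with
  | zero => intro a ε hε h k hk; omega
  | succ n ih =>
    intro a ε hε h k hk
    have h0mem : (0:ℝ) ∈ Set.Ioo (-ε) ε := ⟨by linarith, hε⟩
    have ha0 : a 0 = 0 := by
      have h0 := h 0 h0mem
      rw [Finset.sum_range_succ'] at h0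
      simpa using h0
    -- the tail function
    set g : ℝ → B := fun t => ∑ j ∈ Finset.range n, t ^ j • a (j + 1) with hg
    have hgcont : Continuous g := by
      apply continuous_finset_sum
      intro i _
      exact (continuous_pow i).smul continuous_const
    have hgne : ∀ t ∈ Set.Ioo (-ε) ε, t ≠ 0 → g t = 0 := by
      intro t ht htne
      have h0 := h t ht
      rw [Finset.sum_range_succ'] at h0
      simp only [pow_zero, one_smul] at h0
      have : t • g t = 0 := by
        rw [hg]
        simp only [Finset.smul_sum, smul_smul]
        have : ∀ j, t * t ^ j = t ^ (j+1) := fun j => (pow_succ' t j).symm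
        calc ∑ j ∈ Finset.range n, (t * t ^ j) • a (j + 1)
            = ∑ j ∈ Finset.range n, t ^ (j+1) • a (j + 1) := by
              refine Finset.sum_congr rfl fun j _ => by rw [this j]
          _ = 0 := by
              have := h0
              rw [ha0, add_zero] at this
              exact this
      rcases smul_eq_zero.mp this with h'|h'
      · exact absurd h' htne
      · exact h'
    have hg0 : g 0 = 0 := by
      have h1 : Filter.Tendsto g (nhdsWithin 0 {(0:ℝ)}ᶜ) (nhds (g 0)) :=
        (hgcont.tendsto 0).mono_left nhdsWithin_le_nhds
      have h2 : Filter.Tendsto g (nhdsWithin 0 {(0:ℝ)}ᶜ) (nhds 0) := by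
        apply Filter.Tendsto.congr' _ tendsto_const_nhds
        have hIoo : Set.Ioo (-ε) ε ∈ nhdsWithin (0:ℝ) {(0:ℝ)}ᶜ :=
          nhdsWithin_le_nhds (Ioo_mem_nhds (by linarith) hε)
        filter_upwards [hIoo, self_mem_nhdsWithin] with t ht ht0
        exact (hgne t ht ht0).symm
      exact tendsto_nhds_unique h1 h2
    have hgall : ∀ t ∈ Set.Ioo (-ε) ε, g t = 0 := by
      intro t ht
      by_cases h' : t = 0
      · rw [h']; exact hg0
      · exact hgne t ht h'
    have htail := ih (fun j => a (j+1)) ε hε hgall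
    rcases Nat.eq_zero_or_pos k with rfl|hkpos
    · exact ha0
    · obtain ⟨j, rfl⟩ : ∃ j, k = j + 1 := ⟨k-1, by omega⟩
      exact htail j (by omega)

/-- Expansion of `(x + t • v) ^ m` as a polynomial in `t` with top coefficient `v ^ m`. -/
lemma aux_expand_pow (x v : B) : ∀ m : ℕ, ∃ c : ℕ → B, c m = v ^ m ∧
    ∀ t : ℝ, (x + t • v) ^ m = ∑ k ∈ Finset.range (m+1), t ^ k • c k := by
  intro m
  induction m with
  | zero => exact ⟨fun k => if k = 0 then 1 else 0, by simp, fun t => by simp⟩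
  | succ m ih =>
    obtain ⟨c, hctop, hsum⟩ := ih
    refine ⟨fun k => (if k < m + 1 then c k * x else 0)
      + (if k = 0 then 0 else c (k-1) * v), by simp [hctop, pow_succ], fun t => ?_⟩
    have expand : (x + t • v) ^ (m+1)
        = (∑ k ∈ Finset.range (m+1), t ^ k • c k) * x
          + ∑ k ∈ Finset.range (m+1), t ^ (k+1) • (c k * v) := by
      rw [pow_succ, hsum t, mul_add, Finset.sum_mul, Finset.sum_mul]
      congr 1
      refine Finset.sum_congr rfl fun k _ => ?_
      rw [smul_mul_assoc, mul_smul_comm, smul_smul, ← pow_succ]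
    rw [expand]
    have split : ∑ k ∈ Finset.range (m+1+1), t ^ k • ((if k < m + 1 then c k * x else 0)
        + (if k = 0 then 0 else c (k-1) * v))
      = (∑ k ∈ Finset.range (m+1+1), t ^ k • (if k < m + 1 then c k * x else 0))
        + ∑ k ∈ Finset.range (m+1+1), t ^ k • (if k = 0 then 0 else c (k-1) * v) := by
      rw [← Finset.sum_add_distrib]
      exact Finset.sum_congr rfl fun k _ => smul_add _ _ _
    rw [split]
    congr 1
    · symm
      rw [Finset.sum_range_succ, if_neg (lt_irrefl (m+1)), smul_zero, add_zero]
      rw [Finset.sum_mul]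
      refine Finset.sum_congr rfl fun k hk => ?_
      rw [if_pos (Finset.mem_range.mp hk), smul_mul_assoc]
    · symm
      rw [Finset.sum_range_succ', if_pos rfl, smul_zero, add_zero]
      refine Finset.sum_congr rfl fun k _ => ?_
      rw [if_neg (Nat.succ_ne_zero k), Nat.add_sub_cancel]

/-- Extract centrality of coefficients. -/
lemma aux_central_coeff (G : B →ₗ[ℝ] B) (N : ℕ) (c : ℕ → B) (g : ℝ → B) (ε : ℝ) (hε : 0 < ε)
    (hg : ∀ t ∈ Set.Ioo (-ε) ε, g t = ∑ k ∈ Finset.range (N+1), t ^ k • c k)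
    (hcent : ∀ t ∈ Set.Ioo (-ε) ε, ∀ b : B, G (g t) * b = b * G (g t)) :
    ∀ k < N + 1, ∀ b : B, G (c k) * b = b * G (c k) := by
  intro k hk b
  have key := aux_poly_zero (N+1) (fun k => G (c k) * b - b * G (c k)) ε hε ?_ k hk
  · exact sub_eq_zero.mp key
  · intro t ht
    have h1 : G (g t) = ∑ j ∈ Finset.range (N+1), t ^ j • G (c j) := by
      rw [hg t ht, map_sum]
      exact Finset.sum_congr rfl fun j _ => G.map_smul _ _
    have h2 : ∑ j ∈ Finset.range (N+1), t ^ j • (G (c j) * b - b * G (c j))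
        = G (g t) * b - b * G (g t) := by
      rw [h1, Finset.sum_mul, Finset.mul_sum, ← Finset.sum_sub_distrib]
      refine Finset.sum_congr rfl fun j _ => ?_
      rw [smul_sub, smul_mul_assoc, mul_smul_comm]
    rw [h2, hcent t ht b, sub_self]

/-- Binomial expansion of `(x + t • 1) ^ P`. -/
lemma aux_binom (x : B) (P : ℕ) (t : ℝ) :
    (x + t • 1) ^ P = ∑ k ∈ Finset.range (P+1),
      t ^ k • ((P.choose (P-k)) • x ^ (P-k)) := by
  have h : Commute x (t • (1:B)) := (Commute.one_right x).smul_right t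
  rw [h.add_pow]
  rw [← Finset.sum_range_reflect (fun k => t ^ k • ((P.choose (P-k)) • x ^ (P-k))) (P+1)]
  refine Finset.sum_congr rfl fun m hm => ?_
  have hmP : m ≤ P := Nat.lt_succ_iff.mp (Finset.mem_range.mp hm)
  have h1 : P + 1 - 1 - m = P - m := rfl
  rw [h1]
  have h2 : P - (P - m) = m := Nat.sub_sub_self hmP
  rw [h2]
  rw [smul_pow, one_pow]
  rw [mul_smul_comm, mul_one, smul_mul_assoc]
  congr 1
  rw [nsmul_eq_mul, (Nat.cast_commute (P.choose m) (x ^ m)).eq]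

/-- Baire-category extraction of a uniform pair on an open subset. -/
lemma aux_baire {X : Type*} [NormedAddCommGroup X] [NormedSpace ℝ X] [CompleteSpace X]
    {ι : Type*} [Countable ι] (S : ι → Set X) (hS : ∀ i, IsClosed (S i))
    (W : Set X) (hWo : IsOpen W) (hWne : W.Nonempty) (hcov : ∀ w ∈ W, ∃ i, w ∈ S i) :
    ∃ i U, IsOpen U ∧ U.Nonempty ∧ U ⊆ S i ∧ U ⊆ W := by
  obtain ⟨w₀, hw₀⟩ := hWne
  obtain ⟨r, hr, hball⟩ := Metric.isOpen_iff.mp hWo w₀ hw₀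
  set K : Set X := Metric.closedBall w₀ (r/2) with hK
  have hKW : K ⊆ W := fun z hz => hball (by
    have : dist z w₀ ≤ r/2 := hz
    simp only [Metric.mem_ball]; linarith)
  have hKclosed : IsClosed K := Metric.isClosed_closedBall
  haveI : CompleteSpace K := hKclosed.completeSpace_coe
  haveI : Nonempty K := ⟨⟨w₀, Metric.mem_closedBall_self (by linarith)⟩⟩
  have hcovK : ⋃ i, (Subtype.val ⁻¹' S i : Set K) = Set.univ := by
    ext z
    simp only [Set.mem_iUnion, Set.mem_preimage, Set.mem_univ, iff_true]
    exact hcov z (hKW z.2)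
  obtain ⟨i, z, hz⟩ := nonempty_interior_of_iUnion_of_closed
    (fun i => (hS i).preimage continuous_subtype_val) hcovK
  have hnhds : (Subtype.val ⁻¹' S i : Set K) ∈ nhds z := mem_interior_iff_mem_nhds.mp hz
  obtain ⟨zv, hzK⟩ := z
  rw [nhds_subtype_eq_comap] at hnhds
  obtain ⟨A, hA, hAsub⟩ := Filter.mem_comap.mp hnhds
  obtain ⟨V, hVA, hVo, hzV⟩ := _root_.mem_nhds_iff.mp hA
  have hzcl : zv ∈ closure (Metric.ball w₀ (r/2)) := by
    rw [closure_ball w₀ (ne_of_gt (half_pos hr))]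
    exact hzK
  have hne : (V ∩ Metric.ball w₀ (r/2)).Nonempty := by
    have := mem_closure_iff.mp hzcl V hVo hzV
    exact this
  refine ⟨i, V ∩ Metric.ball w₀ (r/2), hVo.inter Metric.isOpen_ball, hne, ?_, ?_⟩
  · intro w hw
    have hwK : w ∈ K := Metric.ball_subset_closedBall hw.2
    exact hAsub (show (⟨w, hwK⟩ : K) ∈ Subtype.val ⁻¹' A from hVA hw.1)
  · exact fun w hw => hKW (Metric.ball_subset_closedBall hw.2)

/-- small scalar cancellation -/
lemma aux_smul_cancel {r : ℝ} (hr : r ≠ 0) {z : B} (h : r • z = 0) : z = 0 := by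
  have := congrArg (fun u => r⁻¹ • u) h
  simpa [inv_smul_smul₀ hr] using this

/-- membership of perturbations in an open set -/
lemma aux_ball (Uo : Set B) (hUo : IsOpen Uo) (x : B) (hx : x ∈ Uo) (v : B) :
    ∃ ε : ℝ, 0 < ε ∧ ∀ t ∈ Set.Ioo (-ε) ε, x + t • v ∈ Uo := by
  obtain ⟨δ, hδ, hball⟩ := Metric.isOpen_iff.mp hUo x hx
  refine ⟨δ / (‖v‖ + 1), by positivity, fun t ht => ?_⟩
  apply hball
  rw [Metric.mem_ball, dist_eq_norm, add_sub_cancel_left, norm_smul]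
  have h1 : |t| < δ / (‖v‖ + 1) := abs_lt.mpr ⟨ht.1, ht.2⟩
  have h2 : ‖v‖ + 1 > 0 := by positivity
  calc ‖t‖ * ‖v‖ ≤ |t| * (‖v‖ + 1) := by
        rw [Real.norm_eq_abs]
        exact mul_le_mul_of_nonneg_left (by linarith [norm_nonneg v]) (abs_nonneg t)
    _ < (δ / (‖v‖ + 1)) * (‖v‖ + 1) := by
        exact mul_lt_mul_of_pos_right h1 h2
    _ = δ := div_mul_cancel₀ δ (ne_of_gt h2)
end helpers

/-- Theorem: a prime real Banach algebra admitting a continuous automorphism `f` with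
`f(x^p ∘ y^q) + [x^p, y^q] ∈ Z(B)` on a product of nonempty open sets is commutative. -/
theorem prime_banach_comm_of_auto_anticomm_add_comm
    {B : Type*} [NormedRing B] [NormedAlgebra ℝ B] [CompleteSpace B]
    (hprime : ∀ x y : B, (∀ z : B, x * z * y = 0) → x = 0 ∨ y = 0)
    (H₁ H₂ : Set B) (hH₁ : H₁.Nonempty) (hH₂ : H₂.Nonempty)
    (hH₁o : IsOpen H₁) (hH₂o : IsOpen H₂)
    (f : B → B) (hfcont : Continuous f) (hfbij : Function.Bijective f)
    (hfadd : ∀ x y : B, f (x + y) = f x + f y)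
    (hfmul : ∀ x y : B, f (x * y) = f x * f y)
    (hmain : ∀ x ∈ H₁, ∀ y ∈ H₂, ∃ p q : ℕ, 0 < p ∧ 0 < q ∧
      ∀ b : B, (f (x ^ p * y ^ q + y ^ q * x ^ p) + (x ^ p * y ^ q - y ^ q * x ^ p)) * b
        = b * (f (x ^ p * y ^ q + y ^ q * x ^ p) + (x ^ p * y ^ q - y ^ q * x ^ p))) :
    ∀ x y : B, x * y = y * x := by
  -- `f` is real-linear
  have hfsmul : ∀ (t : ℝ) (x : B), f (t • x) = t • f x := fun t x =>
    map_real_smul (AddMonoidHom.mk' f hfadd) hfcont t x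
  -- `f 1 = 1` and `f` preserves powers
  have hf1 : f 1 = 1 := by
    have h : ∀ b : B, f 1 * b = b := by
      intro b
      obtain ⟨a, rfl⟩ := hfbij.2 b
      rw [← hfmul, one_mul]
    have := h 1
    rwa [mul_one] at this
  have hfpow : ∀ (x : B) (n : ℕ), f (x ^ n) = (f x) ^ n := by
    intro x n
    induction n with
    | zero => simpa using hf1
    | succ n ih => rw [pow_succ, hfmul, ih, pow_succ]
  -- The closed sets for the Baire argument
  set S : ℕ × ℕ → Set (B × B) := fun n =>
    {w | ∀ b : B, (f (w.1 ^ (n.1+1) * w.2 ^ (n.2+1) + w.2 ^ (n.2+1) * w.1 ^ (n.1+1))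
        + (w.1 ^ (n.1+1) * w.2 ^ (n.2+1) - w.2 ^ (n.2+1) * w.1 ^ (n.1+1))) * b
      = b * (f (w.1 ^ (n.1+1) * w.2 ^ (n.2+1) + w.2 ^ (n.2+1) * w.1 ^ (n.1+1))
        + (w.1 ^ (n.1+1) * w.2 ^ (n.2+1) - w.2 ^ (n.2+1) * w.1 ^ (n.1+1)))} with hSdef
  have hSclosed : ∀ n, IsClosed (S n) := by
    intro n
    have heq : S n = ⋂ b : B, {w : B × B |
        (f (w.1 ^ (n.1+1) * w.2 ^ (n.2+1) + w.2 ^ (n.2+1) * w.1 ^ (n.1+1))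
        + (w.1 ^ (n.1+1) * w.2 ^ (n.2+1) - w.2 ^ (n.2+1) * w.1 ^ (n.1+1))) * b
      = b * (f (w.1 ^ (n.1+1) * w.2 ^ (n.2+1) + w.2 ^ (n.2+1) * w.1 ^ (n.1+1))
        + (w.1 ^ (n.1+1) * w.2 ^ (n.2+1) - w.2 ^ (n.2+1) * w.1 ^ (n.1+1)))} := by
      ext w
      simp only [hSdef, Set.mem_setOf_eq, Set.mem_iInter]
    rw [heq]
    refine isClosed_iInter fun b => isClosed_eq ?_ ?_
    · have c1 : Continuous fun w : B × B => w.1 ^ (n.1+1) * w.2 ^ (n.2+1) :=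
        ((continuous_fst.pow _).mul (continuous_snd.pow _))
      have c2 : Continuous fun w : B × B => w.2 ^ (n.2+1) * w.1 ^ (n.1+1) :=
        ((continuous_snd.pow _).mul (continuous_fst.pow _))
      exact ((hfcont.comp (c1.add c2)).add (c1.sub c2)).mul continuous_const
    · have c1 : Continuous fun w : B × B => w.1 ^ (n.1+1) * w.2 ^ (n.2+1) :=
        ((continuous_fst.pow _).mul (continuous_snd.pow _))
      have c2 : Continuous fun w : B × B => w.2 ^ (n.2+1) * w.1 ^ (n.1+1) :=
        ((continuous_snd.pow _).mul (continuous_fst.pow _))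
      exact continuous_const.mul ((hfcont.comp (c1.add c2)).add (c1.sub c2))
  -- Baire category
  have hcov : ∀ w ∈ H₁ ×ˢ H₂, ∃ n : ℕ × ℕ, w ∈ S n := by
    rintro ⟨x, y⟩ hw
    obtain ⟨p, q, hp, hq, h⟩ := hmain x hw.1 y hw.2
    refine ⟨(p-1, q-1), ?_⟩
    simpa only [hSdef, Set.mem_setOf_eq, Nat.sub_add_cancel hp, Nat.sub_add_cancel hq] using h
  obtain ⟨n, U, hUo, hUne, hUS, hUW⟩ := aux_baire S hSclosed (H₁ ×ˢ H₂)
    (hH₁o.prod hH₂o) (hH₁.prod hH₂) hcov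
  set P := n.1 + 1 with hPdef
  set Q := n.2 + 1 with hQdef
  have hP : 0 < P := Nat.succ_pos _
  obtain ⟨w₁, hw₁U⟩ := hUne
  obtain ⟨U₁, U₂, hU₁o, hU₂o, hw11, hw12, hprodU⟩ :=
    isOpen_prod_iff.mp hUo w₁.1 w₁.2 (by simpa using hw₁U)
  have hcond : ∀ x ∈ U₁, ∀ y ∈ U₂, ∀ b : B,
      (f (x ^ P * y ^ Q + y ^ Q * x ^ P) + (x ^ P * y ^ Q - y ^ Q * x ^ P)) * b
        = b * (f (x ^ P * y ^ Q + y ^ Q * x ^ P) + (x ^ P * y ^ Q - y ^ Q * x ^ P)) := by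
    intro x hx y hy
    exact hUS (hprodU (Set.mk_mem_prod hx hy))
  -- Step 1 : remove the restriction on the first variable
  have step1 : ∀ v : B, ∀ y ∈ U₂, ∀ b : B,
      (f (v ^ P * y ^ Q + y ^ Q * v ^ P) + (v ^ P * y ^ Q - y ^ Q * v ^ P)) * b
        = b * (f (v ^ P * y ^ Q + y ^ Q * v ^ P) + (v ^ P * y ^ Q - y ^ Q * v ^ P)) := by
    intro v y hy
    obtain ⟨ε, hε, hmem⟩ := aux_ball U₁ hU₁o w₁.1 hw11 v
    obtain ⟨c, hctop, hcsum⟩ := aux_expand_pow w₁.1 v P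
    set G : B →ₗ[ℝ] B :=
      { toFun := fun u => f (u * y ^ Q + y ^ Q * u) + (u * y ^ Q - y ^ Q * u)
        map_add' := fun u u' => by
          simp only [add_mul, mul_add]
          rw [show u * y ^ Q + u' * y ^ Q + (y ^ Q * u + y ^ Q * u')
              = (u * y ^ Q + y ^ Q * u) + (u' * y ^ Q + y ^ Q * u') by abel, hfadd]
          abel
        map_smul' := fun r u => by
          rw [smul_mul_assoc, mul_smul_comm, ← smul_add, ← smul_sub, hfsmul,
            ← smul_add, RingHom.id_apply] } with hGdef
    have key := aux_central_coeff G P c (fun t => (w₁.1 + t • v) ^ P) ε hε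
      (fun t _ => hcsum t)
      (fun t ht b => hcond (w₁.1 + t • v) (hmem t ht) y hy b)
      P (Nat.lt_succ_self P)
    rw [hctop] at key
    exact key
  -- Step 2 : `f (v ^ P)` is central for every `v`
  have step2 : ∀ v : B, ∀ b : B, f (v ^ P) * b = b * f (v ^ P) := by
    intro v
    obtain ⟨ε, hε, hmem⟩ := aux_ball U₂ hU₂o w₁.2 hw12 (1 : B)
    obtain ⟨d, hdtop, hdsum⟩ := aux_expand_pow w₁.2 (1 : B) Q
    set G₂ : B →ₗ[ℝ] B :=
      { toFun := fun u => f (v ^ P * u + u * v ^ P) + (v ^ P * u - u * v ^ P)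
        map_add' := fun u u' => by
          simp only [add_mul, mul_add]
          rw [show v ^ P * u + v ^ P * u' + (u * v ^ P + u' * v ^ P)
              = (v ^ P * u + u * v ^ P) + (v ^ P * u' + u' * v ^ P) by abel, hfadd]
          abel
        map_smul' := fun r u => by
          rw [mul_smul_comm, smul_mul_assoc, ← smul_add, ← smul_sub, hfsmul,
            ← smul_add, RingHom.id_apply] } with hG2def
    have key := aux_central_coeff G₂ Q d (fun t => (w₁.2 + t • (1:B)) ^ Q) ε hε
      (fun t _ => hdsum t)
      (fun t ht b => step1 v (w₁.2 + t • (1:B)) (hmem t ht) b)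
      Q (Nat.lt_succ_self Q)
    rw [hdtop, one_pow] at key
    intro b
    have hkey : (f (v ^ P * 1 + 1 * v ^ P) + (v ^ P * 1 - 1 * v ^ P)) * b
        = b * (f (v ^ P * 1 + 1 * v ^ P) + (v ^ P * 1 - 1 * v ^ P)) := key b
    rw [mul_one, one_mul, sub_self, add_zero, hfadd] at hkey
    have h2 : (2:ℝ) • (f (v ^ P) * b - b * f (v ^ P)) = 0 := by
      rw [two_smul]
      rw [add_mul, mul_add] at hkey
      rw [sub_add_sub_comm, hkey, sub_self]
    exact sub_eq_zero.mp (aux_smul_cancel (two_ne_zero) h2)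
  -- Step 3 : `u ^ P` is central for every `u`
  have step3 : ∀ u : B, ∀ b : B, u ^ P * b = b * u ^ P := by
    intro u b
    obtain ⟨s, rfl⟩ := hfbij.2 u
    rw [← hfpow]
    exact step2 s b
  -- Step 4 : everything is central
  have step4 : ∀ x b : B, x * b = b * x := by
    intro x b
    have hcent : ∀ t ∈ Set.Ioo (-(1:ℝ)) 1, ∀ b' : B,
        (LinearMap.id : B →ₗ[ℝ] B) ((x + t • 1) ^ P) * b'
          = b' * (LinearMap.id : B →ₗ[ℝ] B) ((x + t • 1) ^ P) :=
      fun t _ b' => step3 (x + t • 1) b'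
    have hPm : P - 1 < P + 1 := by omega
    have key := aux_central_coeff (LinearMap.id : B →ₗ[ℝ] B) P
      (fun k => (P.choose (P-k)) • x ^ (P-k)) (fun t => (x + t • 1) ^ P) 1 one_pos
      (fun t _ => aux_binom x P t) hcent (P-1) hPm b
    simp only [LinearMap.id_coe, id_eq] at key
    rw [Nat.sub_sub_self hP, Nat.choose_one_right, pow_one] at key
    -- key : (P • x) * b = b * (P • x)
    have hc : (P:ℝ) • (x * b - b * x) = 0 := by
      have h1 : (P:ℝ) • x = P • x := Nat.cast_smul_eq_nsmul ℝ P x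
      rw [smul_sub, ← smul_mul_assoc, ← mul_smul_comm, h1, key, sub_self]
    have hPne : (P:ℝ) ≠ 0 := Nat.cast_ne_zero.mpr hP.ne'
    exact sub_eq_zero.mp (aux_smul_cancel hPne hc)
  intro x y
  exact step4 x y
end

section
/- Let B be a prime Banach algebra over ℝ, let H₁ and H₂ be non-empty open subsets of B, and let f : B → B be a continuous automorphism. Suppose that for every (x, y) ∈ H₁ × H₂ there exist positive integers p = p(x,y) ≥ 1 and q = q(x,y) ≥ 1 such that f(xᵖyᵠ) − xᵖ∘yᵠ ∈ Z(B). Then B is commutative. -/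
open Finset

section aux
variable {B : Type*} [NormedRing B] [NormedAlgebra ℝ B]

/-- A `B`-valued polynomial function vanishing on a punctured interval has all
coefficients zero. -/
lemma aux_poly_vanish : ∀ (n : ℕ) (c : ℕ → B) (ε : ℝ), 0 < ε →
    (∀ t : ℝ, t ≠ 0 → |t| < ε → ∑ i ∈ Finset.range (n + 1), t ^ i • c i = 0) →
    ∀ i ≤ n, c i = 0 := by
  intro n
  induction n with
  | zero =>
    intro c ε hε h i hi
    interval_cases i
    have := h (ε / 2) (by positivity) (by rw [abs_of_pos (by positivity)]; linarith)
    simpa using this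
  | succ n IH =>
    intro c ε hε h
    have hc0 : c 0 = 0 := by
      have hcl : IsClosed {t : ℝ | ∑ i ∈ Finset.range (n + 2), t ^ i • c i = 0} := by
        apply isClosed_eq _ continuous_const
        exact continuous_finset_sum _ fun i _ => (continuous_pow i).smul continuous_const
      have htend : Filter.Tendsto (fun k : ℕ => ε / (k + 2)) Filter.atTop (nhds 0) := by
        apply Filter.Tendsto.div_atTop (tendsto_const_nhds)
        exact Filter.tendsto_atTop_add_const_right _ 2 tendsto_natCast_atTop_atTop
      have hmem : (0 : ℝ) ∈ {t : ℝ | ∑ i ∈ Finset.range (n + 2), t ^ i • c i = 0} := by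
        apply hcl.mem_of_tendsto htend
        filter_upwards with k
        have hk2 : (0:ℝ) < (k : ℝ) + 2 := by positivity
        have h1 : ε / ((k:ℝ) + 2) ≠ 0 := by positivity
        have h2 : |ε / ((k:ℝ) + 2)| < ε := by
          rw [abs_of_pos (by positivity)]
          rw [div_lt_iff₀ hk2]
          nlinarith
        exact h _ h1 h2
      simp only [Set.mem_setOf_eq] at hmem
      rw [Finset.sum_range_succ'] at hmem
      simpa using hmem
    have hstep : ∀ t : ℝ, t ≠ 0 → |t| < ε →
        ∑ i ∈ Finset.range (n + 1), t ^ i • c (i + 1) = 0 := by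
      intro t ht htl
      have h1 := h t ht htl
      rw [Finset.sum_range_succ'] at h1
      simp only [hc0, smul_zero, add_zero, pow_zero] at h1
      have h2 : t • ∑ i ∈ Finset.range (n + 1), t ^ i • c (i + 1) = 0 := by
        rw [Finset.smul_sum]
        rw [← h1]
        apply Finset.sum_congr rfl
        intro i _
        rw [smul_smul, pow_succ, mul_comm]
      have := congrArg (fun v => t⁻¹ • v) h2
      simpa [smul_smul, inv_mul_cancel₀ ht] using this
    have hrec := IH (fun i => c (i + 1)) ε hε hstep
    intro i hi
    cases i with
    | zero => exact hc0
    | succ i => exact hrec i (Nat.lt_succ_iff.mp hi)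

/-- Expansion of `(a + t • b) ^ q` as a polynomial in `t` with top coefficient `b ^ q`. -/
lemma aux_pow_expand (a b : B) (q : ℕ) :
    ∃ c : ℕ → B, c q = b ^ q ∧
      ∀ t : ℝ, (a + t • b) ^ q = ∑ i ∈ Finset.range (q + 1), t ^ i • c i := by
  induction q with
  | zero =>
    refine ⟨fun i => if i = 0 then 1 else 0, by simp, fun t => by simp⟩
  | succ q IH =>
    obtain ⟨c, hcq, hc⟩ := IH
    refine ⟨fun i => (if i ≤ q then c i * a else 0) +
      (if i = 0 then 0 else c (i - 1) * b), ?_, ?_⟩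
    · simp [hcq, pow_succ]
    · intro t
      rw [pow_succ, hc t, Finset.sum_mul]
      have lhs_eq : ∑ i ∈ Finset.range (q + 1), (t ^ i • c i) * (a + t • b)
          = (∑ i ∈ Finset.range (q + 1), t ^ i • (c i * a))
            + ∑ i ∈ Finset.range (q + 1), t ^ (i + 1) • (c i * b) := by
        rw [← Finset.sum_add_distrib]
        apply Finset.sum_congr rfl
        intro i _
        rw [mul_add, smul_mul_assoc, smul_mul_assoc]
        congr 1
        rw [mul_smul_comm, smul_smul, pow_succ]
      rw [lhs_eq]
      have rhs_eq : ∑ i ∈ Finset.range (q + 2),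
            t ^ i • ((if i ≤ q then c i * a else 0) +
              (if i = 0 then 0 else c (i - 1) * b))
          = (∑ i ∈ Finset.range (q + 2), t ^ i • (if i ≤ q then c i * a else 0))
            + ∑ i ∈ Finset.range (q + 2), t ^ i • (if i = 0 then 0 else c (i - 1) * b) := by
        rw [← Finset.sum_add_distrib]
        apply Finset.sum_congr rfl
        intro i _
        rw [smul_add]
      rw [rhs_eq]
      congr 1
      · symm
        rw [Finset.sum_range_succ, if_neg (by omega : ¬ q + 1 ≤ q)]
        rw [smul_zero, add_zero]
        apply Finset.sum_congr rfl
        intro i hi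
        simp only [Finset.mem_range] at hi
        rw [if_pos (by omega : i ≤ q)]
      · symm
        rw [Finset.sum_range_succ', if_pos rfl]
        rw [smul_zero, add_zero]
        apply Finset.sum_congr rfl
        intro i _
        rw [if_neg (by omega : ¬ i + 1 = 0)]
        simp


/-- Extension of the centralizing identity from a ball to the whole algebra,
for an additive ℝ-homogeneous map `L`. -/
lemma aux_extend (L : B → B)
    (hLadd : ∀ u v, L (u + v) = L u + L v)
    (hLsmul : ∀ (t : ℝ) (u : B), L (t • u) = t • L u)
    (Q : ℕ) (b₀ : B) (ε : ℝ) (hε : 0 < ε)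
    (h : ∀ w : B, ‖w - b₀‖ < ε → ∀ z, L (w ^ Q) * z = z * L (w ^ Q)) :
    ∀ w z : B, L (w ^ Q) * z = z * L (w ^ Q) := by
  intro w z
  obtain ⟨c, hcq, hc⟩ := aux_pow_expand b₀ w Q
  set ψ : B →+ B := AddMonoidHom.mk' L hLadd with hψ
  have hδ : 0 < ε / (‖w‖ + 1) := by positivity
  have key : ∀ t : ℝ, t ≠ 0 → |t| < ε / (‖w‖ + 1) →
      ∑ i ∈ Finset.range (Q + 1), t ^ i • (L (c i) * z - z * L (c i)) = 0 := by
    intro t ht htl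
    have hmem : ‖(b₀ + t • w) - b₀‖ < ε := by
      rw [add_sub_cancel_left, norm_smul, Real.norm_eq_abs]
      calc |t| * ‖w‖ ≤ |t| * (‖w‖ + 1) := by nlinarith [abs_nonneg t, norm_nonneg w]
        _ < ε := by
            rw [← lt_div_iff₀ (by positivity : (0:ℝ) < ‖w‖ + 1)]
            exact htl
    have h1 := h (b₀ + t • w) hmem z
    have hL : L ((b₀ + t • w) ^ Q) = ∑ i ∈ Finset.range (Q + 1), t ^ i • L (c i) := by
      rw [hc t, show L = ⇑ψ from rfl, map_sum]
      exact Finset.sum_congr rfl fun i _ => by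
        rw [show ⇑ψ = L from rfl, hLsmul]
    rw [hL, Finset.sum_mul, Finset.mul_sum] at h1
    calc ∑ i ∈ Finset.range (Q + 1), t ^ i • (L (c i) * z - z * L (c i))
        = (∑ i ∈ Finset.range (Q + 1), t ^ i • (L (c i) * z))
          - ∑ i ∈ Finset.range (Q + 1), t ^ i • (z * L (c i)) := by
          rw [← Finset.sum_sub_distrib]
          exact Finset.sum_congr rfl fun i _ => smul_sub _ _ _
      _ = 0 := by
          rw [sub_eq_zero]
          simpa only [smul_mul_assoc, mul_smul_comm] using h1
  have hvan := aux_poly_vanish Q _ _ hδ key Q le_rfl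
  rw [hcq] at hvan
  exact sub_eq_zero.mp hvan

/-- Passing from the identity on `P`-th powers to the identity on all elements. -/
lemma aux_linearize (L : B → B)
    (hLadd : ∀ u v, L (u + v) = L u + L v)
    (hLsmul : ∀ (t : ℝ) (u : B), L (t • u) = t • L u)
    (P : ℕ) (hP : 0 < P)
    (h : ∀ w z : B, L (w ^ P) * z = z * L (w ^ P)) :
    ∀ w z : B, L w * z = z * L w := by
  intro w z
  set ψ : B →+ B := AddMonoidHom.mk' L hLadd with hψ
  set c : ℕ → B := fun i => P.choose i • w ^ i with hcdef
  have expand : ∀ t : ℝ, ((1 : B) + t • w) ^ P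
      = ∑ i ∈ Finset.range (P + 1), t ^ i • c i := by
    intro t
    rw [add_comm, Commute.add_pow (Commute.one_right (t • w))]
    apply Finset.sum_congr rfl
    intro i _
    simp only [hcdef, one_pow, mul_one, smul_pow, smul_mul_assoc, nsmul_eq_mul]
    rw [(Nat.cast_commute (P.choose i) (w ^ i)).eq]
  have key : ∀ t : ℝ, t ≠ 0 → |t| < 1 →
      ∑ i ∈ Finset.range (P + 1), t ^ i • (L (c i) * z - z * L (c i)) = 0 := by
    intro t ht _
    have h1 := h ((1 : B) + t • w) z
    have hL : L (((1 : B) + t • w) ^ P) = ∑ i ∈ Finset.range (P + 1), t ^ i • L (c i) := by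
      rw [expand t, show L = ⇑ψ from rfl, map_sum]
      exact Finset.sum_congr rfl fun i _ => by
        rw [show ⇑ψ = L from rfl, hLsmul]
    rw [hL, Finset.sum_mul, Finset.mul_sum] at h1
    calc ∑ i ∈ Finset.range (P + 1), t ^ i • (L (c i) * z - z * L (c i))
        = (∑ i ∈ Finset.range (P + 1), t ^ i • (L (c i) * z))
          - ∑ i ∈ Finset.range (P + 1), t ^ i • (z * L (c i)) := by
          rw [← Finset.sum_sub_distrib]
          exact Finset.sum_congr rfl fun i _ => smul_sub _ _ _
      _ = 0 := by
          rw [sub_eq_zero]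
          simpa only [smul_mul_assoc, mul_smul_comm] using h1
  have hvan := aux_poly_vanish P _ _ one_pos key 1 hP
  have hc1 : L (c 1) = P • L w := by
    have : c 1 = P • w := by simp [hcdef]
    rw [this, show L = ⇑ψ from rfl, map_nsmul]
  rw [hc1] at hvan
  have hcast : ∀ b : B, (P : ℝ) • b = P • b := fun b => Nat.cast_smul_eq_nsmul ℝ P b
  have hP0 : (P : ℝ) ≠ 0 := Nat.cast_ne_zero.mpr hP.ne'
  have hsmul0 : (P : ℝ) • (L w * z - z * L w) = 0 := by
    rw [smul_mul_assoc, mul_smul_comm] at hvan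
    rw [smul_sub, hcast, hcast]
    exact hvan
  have := congrArg (fun v => (P : ℝ)⁻¹ • v) hsmul0
  simpa [smul_smul, inv_mul_cancel₀ hP0, sub_eq_zero] using this

end aux

/-- Theorem: a prime real Banach algebra admitting a continuous automorphism `f` with
`f(x^p y^q) − x^p ∘ y^q ∈ Z(B)` on a product of nonempty open sets is commutative. -/
theorem prime_banach_comm_of_auto_mul_sub_anticomm
    {B : Type*} [NormedRing B] [NormedAlgebra ℝ B] [CompleteSpace B]
    (hprime : ∀ x y : B, (∀ z : B, x * z * y = 0) → x = 0 ∨ y = 0)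
    (H₁ H₂ : Set B) (hH₁ : H₁.Nonempty) (hH₂ : H₂.Nonempty)
    (hH₁o : IsOpen H₁) (hH₂o : IsOpen H₂)
    (f : B → B) (hfcont : Continuous f) (hfbij : Function.Bijective f)
    (hfadd : ∀ x y : B, f (x + y) = f x + f y)
    (hfmul : ∀ x y : B, f (x * y) = f x * f y)
    (hmain : ∀ x ∈ H₁, ∀ y ∈ H₂, ∃ p q : ℕ, 0 < p ∧ 0 < q ∧
      ∀ b : B, (f (x ^ p * y ^ q) - (x ^ p * y ^ q + y ^ q * x ^ p)) * b
        = b * (f (x ^ p * y ^ q) - (x ^ p * y ^ q + y ^ q * x ^ p))) :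
    ∀ x y : B, x * y = y * x := by
  classical
  set φ : B →+ B := AddMonoidHom.mk' f (fun a b => hfadd a b) with hφ
  have hfsmul : ∀ (t : ℝ) (u : B), f (t • u) = t • f u := fun t u =>
    map_real_smul φ hfcont t u
  -- Step A: for each x ∈ H₁, Baire category gives exponents working for ALL y.
  have stepA : ∀ x ∈ H₁, ∃ p q : ℕ, ∀ (Y z : B),
      (f (x ^ (p+1) * Y ^ (q+1)) - (x ^ (p+1) * Y ^ (q+1) + Y ^ (q+1) * x ^ (p+1))) * z
        = z * (f (x ^ (p+1) * Y ^ (q+1)) - (x ^ (p+1) * Y ^ (q+1) + Y ^ (q+1) * x ^ (p+1))) := by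
    intro x hx
    set S : Option (ℕ × ℕ) → Set B := fun o => match o with
      | none => H₂ᶜ
      | some pq => {y : B | ∀ z : B,
          (f (x ^ (pq.1+1) * y ^ (pq.2+1)) - (x ^ (pq.1+1) * y ^ (pq.2+1) + y ^ (pq.2+1) * x ^ (pq.1+1))) * z
            = z * (f (x ^ (pq.1+1) * y ^ (pq.2+1)) - (x ^ (pq.1+1) * y ^ (pq.2+1) + y ^ (pq.2+1) * x ^ (pq.1+1)))}
      with hS
    have hSclosed : ∀ o, IsClosed (S o) := by
      rintro (_ | ⟨p, q⟩)
      · exact hH₂o.isClosed_compl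
      · show IsClosed {y : B | ∀ z : B, _}
        rw [Set.setOf_forall]
        apply isClosed_iInter
        intro z
        apply isClosed_eq
        · exact ((hfcont.comp (continuous_const.mul (continuous_pow _))).sub
            ((continuous_const.mul (continuous_pow _)).add
              ((continuous_pow _).mul continuous_const))).mul continuous_const
        · exact continuous_const.mul ((hfcont.comp (continuous_const.mul (continuous_pow _))).sub
            ((continuous_const.mul (continuous_pow _)).add
              ((continuous_pow _).mul continuous_const)))
    have hScover : ⋃ o, S o = Set.univ := by
      apply Set.eq_univ_of_forall
      intro y
      rw [Set.mem_iUnion]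
      by_cases hy : y ∈ H₂
      · obtain ⟨p, q, hp, hq, hpq⟩ := hmain x hx y hy
        refine ⟨some (p - 1, q - 1), ?_⟩
        show ∀ z : B, _
        rw [Nat.sub_add_cancel hp, Nat.sub_add_cancel hq]
        exact hpq
      · exact ⟨none, hy⟩
    have hdense := dense_iUnion_interior_of_closed hSclosed hScover
    obtain ⟨y₀, hy₀s, hy₀H₂⟩ := hdense.exists_mem_open hH₂o hH₂
    rw [Set.mem_iUnion] at hy₀s
    obtain ⟨o, ho⟩ := hy₀s
    rcases o with _ | ⟨p, q⟩
    · exact absurd hy₀H₂ (interior_subset ho)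
    · refine ⟨p, q, ?_⟩
      obtain ⟨ε, hε, hball⟩ := Metric.isOpen_iff.mp isOpen_interior y₀ ho
      refine aux_extend (fun w => f (x ^ (p+1) * w) - (x ^ (p+1) * w + w * x ^ (p+1)))
        ?_ ?_ (q+1) y₀ ε hε ?_
      · intro u v
        beta_reduce
        rw [mul_add, hfadd]
        noncomm_ring
      · intro t u
        beta_reduce
        rw [mul_smul_comm, hfsmul, smul_mul_assoc, smul_sub, smul_add]
      · intro w hw z
        have hmem : w ∈ S (some (p, q)) :=
          interior_subset (hball (by rw [Metric.mem_ball, dist_eq_norm]; exact hw))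
        exact hmem z
  -- Step B: Baire category over x gives uniform exponents for all x, y.
  have stepB : ∃ p q : ℕ, ∀ (X Y z : B),
      (f (X ^ (p+1) * Y ^ (q+1)) - (X ^ (p+1) * Y ^ (q+1) + Y ^ (q+1) * X ^ (p+1))) * z
        = z * (f (X ^ (p+1) * Y ^ (q+1)) - (X ^ (p+1) * Y ^ (q+1) + Y ^ (q+1) * X ^ (p+1))) := by
    set G : Option (ℕ × ℕ) → Set B := fun o => match o with
      | none => H₁ᶜ
      | some pq => {x : B | ∀ Y z : B,
          (f (x ^ (pq.1+1) * Y ^ (pq.2+1)) - (x ^ (pq.1+1) * Y ^ (pq.2+1) + Y ^ (pq.2+1) * x ^ (pq.1+1))) * z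
            = z * (f (x ^ (pq.1+1) * Y ^ (pq.2+1)) - (x ^ (pq.1+1) * Y ^ (pq.2+1) + Y ^ (pq.2+1) * x ^ (pq.1+1)))}
      with hG
    have hGclosed : ∀ o, IsClosed (G o) := by
      rintro (_ | ⟨p, q⟩)
      · exact hH₁o.isClosed_compl
      · show IsClosed {x : B | ∀ Y z : B, _}
        rw [Set.setOf_forall]
        apply isClosed_iInter
        intro Y
        rw [Set.setOf_forall]
        apply isClosed_iInter
        intro z
        apply isClosed_eq
        · exact ((hfcont.comp ((continuous_pow _).mul continuous_const)).sub
            (((continuous_pow _).mul continuous_const).add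
              (continuous_const.mul (continuous_pow _)))).mul continuous_const
        · exact continuous_const.mul ((hfcont.comp ((continuous_pow _).mul continuous_const)).sub
            (((continuous_pow _).mul continuous_const).add
              (continuous_const.mul (continuous_pow _))))
    have hGcover : ⋃ o, G o = Set.univ := by
      apply Set.eq_univ_of_forall
      intro x
      rw [Set.mem_iUnion]
      by_cases hx : x ∈ H₁
      · obtain ⟨p, q, hpq⟩ := stepA x hx
        exact ⟨some (p, q), hpq⟩
      · exact ⟨none, hx⟩
    have hdense := dense_iUnion_interior_of_closed hGclosed hGcover
    obtain ⟨x₀, hx₀s, hx₀H₁⟩ := hdense.exists_mem_open hH₁o hH₁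
    rw [Set.mem_iUnion] at hx₀s
    obtain ⟨o, ho⟩ := hx₀s
    rcases o with _ | ⟨p, q⟩
    · exact absurd hx₀H₁ (interior_subset ho)
    · refine ⟨p, q, ?_⟩
      intro X Y z
      obtain ⟨ε, hε, hball⟩ := Metric.isOpen_iff.mp isOpen_interior x₀ ho
      refine aux_extend (fun w => f (w * Y ^ (q+1)) - (w * Y ^ (q+1) + Y ^ (q+1) * w))
        ?_ ?_ (p+1) x₀ ε hε ?_ X z
      · intro u v
        beta_reduce
        rw [add_mul, hfadd]
        noncomm_ring
      · intro t u
        beta_reduce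
        rw [smul_mul_assoc, hfsmul, mul_smul_comm, smul_sub, smul_add]
      · intro w hw z'
        have hmem : w ∈ G (some (p, q)) :=
          interior_subset (hball (by rw [Metric.mem_ball, dist_eq_norm]; exact hw))
        exact hmem Y z'
  obtain ⟨p, q, hB⟩ := stepB
  -- Step C1: remove the power on x.
  have hC1 : ∀ (X y z : B),
      (f (X * y ^ (q+1)) - (X * y ^ (q+1) + y ^ (q+1) * X)) * z
        = z * (f (X * y ^ (q+1)) - (X * y ^ (q+1) + y ^ (q+1) * X)) := by
    intro X y z
    refine aux_linearize (fun w => f (w * y ^ (q+1)) - (w * y ^ (q+1) + y ^ (q+1) * w))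
      ?_ ?_ (p+1) (Nat.succ_pos p) ?_ X z
    · intro u v
      beta_reduce
      rw [add_mul, hfadd]
      noncomm_ring
    · intro t u
      beta_reduce
      rw [smul_mul_assoc, hfsmul, mul_smul_comm, smul_sub, smul_add]
    · intro w z'
      exact hB w y z'
  -- Step C2: remove the power on y.
  have hC2 : ∀ (x Y z : B),
      (f (x * Y) - (x * Y + Y * x)) * z = z * (f (x * Y) - (x * Y + Y * x)) := by
    intro x Y z
    refine aux_linearize (fun w => f (x * w) - (x * w + w * x))
      ?_ ?_ (q+1) (Nat.succ_pos q) ?_ Y z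
    · intro u v
      beta_reduce
      rw [mul_add, hfadd]
      noncomm_ring
    · intro t u
      beta_reduce
      rw [mul_smul_comm, hfsmul, smul_mul_assoc, smul_sub, smul_add]
    · intro w z'
      exact hC1 x w z'
  -- Step D: all commutators are central.
  have hK : ∀ (x y z : B), (x * y - y * x) * z = z * (x * y - y * x) := by
    intro x y z
    have e1 := hC2 x y z
    have e2 := hC2 (x * y) 1 z
    rw [mul_one, one_mul] at e2
    have e3 : (x * y - y * x) * z
        = (f (x * y) - (x * y + y * x)) * z - (f (x * y) - (x * y + x * y)) * z := by
      noncomm_ring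
    rw [e1, e2] at e3
    rw [e3]
    noncomm_ring
  -- endgame: in a prime ring, central commutators force commutativity.
  intro x y
  have hKc : ∀ z : B, (x * y - y * x) * z = z * (x * y - y * x) := hK x y
  have hxKc : ∀ z : B, (x * (x * y - y * x)) * z = z * (x * (x * y - y * x)) := by
    intro z
    have h1 := hK x (x * y) z
    have hrw : x * (x * y) - (x * y) * x = x * (x * y - y * x) := by noncomm_ring
    rw [hrw] at h1
    exact h1
  have hKK : (x * y - y * x) * (x * y - y * x) = 0 := by
    have h1 := hxKc y
    have h2 := hKc y
    calc (x * y - y * x) * (x * y - y * x)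
        = x * (y * (x * y - y * x)) - y * (x * (x * y - y * x)) := by noncomm_ring
      _ = x * ((x * y - y * x) * y) - y * (x * (x * y - y * x)) := by rw [← h2]
      _ = (x * (x * y - y * x)) * y - y * (x * (x * y - y * x)) := by rw [mul_assoc]
      _ = 0 := by rw [h1]; exact sub_self _
  have hzero := hprime (x * y - y * x) (x * y - y * x) (by
    intro z
    calc (x * y - y * x) * z * (x * y - y * x)
        = (x * y - y * x) * (z * (x * y - y * x)) := by rw [mul_assoc]
      _ = (x * y - y * x) * ((x * y - y * x) * z) := by rw [← hKc z]
      _ = ((x * y - y * x) * (x * y - y * x)) * z := by rw [← mul_assoc]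
      _ = 0 := by rw [hKK, zero_mul])
  rcases hzero with h | h <;> exact sub_eq_zero.mp h
end

section
/- Let B be a prime Banach algebra over ℝ, let H₁ and H₂ be non-empty open subsets of B, and let f : B → B be a continuous automorphism. Suppose that for every (x, y) ∈ H₁ × H₂ there exist positive integers p = p(x,y) ≥ 1 and q = q(x,y) ≥ 1 such that f(xᵖ∘yᵠ) − [xᵖ, yᵠ] ∈ Z(B). Then B is commutative. -/
/-!
For `y ∈ H₂` and `x₀ ∈ H₁`, the points `x₀ + t` with `t` real and small lie in `H₁`. There are
uncountably many such `t` but only countably many exponent pairs, so one pair `(p, q)` serves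
infinitely many `t`. The defect `f((x₀ + t)ᵖ ∘ y^q) − [(x₀ + t)ᵖ, y^q]` is a polynomial in `t`
with coefficients in `B`, central at infinitely many `t`, hence all its coefficients are central;
its coefficient of `tᵖ` is `2 f(y^q)`, so `y^q` is central. The same argument along the lines
`y₀ + t a` (coefficient of `tⁿ`: `aⁿ`) shows that every `a ∈ B` has a central power, and along
`x + t` (coefficient of `tⁿ⁻¹` in `(x + t)ⁿ`: `n x`) that every `x` is central.
-/

open Polynomial Topology

theorem Set.exists_infinite_setOf_of_not_countable {α ι : Type*} [Countable ι] {T : Set α}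
    (hT : ¬ T.Countable) {P : α → ι → Prop} (h : ∀ t ∈ T, ∃ i, P t i) :
    ∃ i, {t ∈ T | P t i}.Infinite := by
  by_contra! hfin
  refine hT ((Set.countable_iUnion fun i => (hfin i).countable).mono fun t ht => ?_)
  obtain ⟨i, hi⟩ := h t ht
  exact Set.mem_iUnion.2 ⟨i, ht, hi⟩

theorem Real.not_countable_of_mem_nhds {s : Set ℝ} {x : ℝ} (hs : s ∈ 𝓝 x) : ¬ s.Countable := by
  rw [← Cardinal.le_aleph0_iff_set_countable, cardinal_eq_of_mem_nhds ℝ hs, Cardinal.mk_real,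
    not_le]
  exact Cardinal.aleph0_lt_continuum

theorem not_countable_setOf_smul_add_mem {E : Type*} [AddCommGroup E] [Module ℝ E]
    [TopologicalSpace E] [ContinuousAdd E] [ContinuousSMul ℝ E] {U : Set E} (hU : IsOpen U)
    {x : E} (hx : x ∈ U) (v : E) : ¬ {t : ℝ | t • v + x ∈ U}.Countable := by
  refine Real.not_countable_of_mem_nhds (x := 0) ?_
  have hcont : Continuous fun t : ℝ => t • v + x := by fun_prop
  exact hcont.continuousAt.preimage_mem_nhds (hU.mem_nhds (by simpa using hx))

namespace Polynomial

section ScalarEval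

variable {K A : Type*} [CommSemiring K] [Semiring A] [Algebra K A]

/-- Evaluation at a scalar `t`; scalars are central, so this is multiplicative even when `A` is
not commutative. -/
def scalarEval (t : K) : A[X] →ₐ[K] A :=
  eval₂AlgHom (AlgHom.id K A) (algebraMap K A t) (Algebra.commute_algebraMap_right t)

theorem scalarEval_apply (t : K) (p : A[X]) : scalarEval t p = p.eval (algebraMap K A t) := rfl

@[simp]
theorem scalarEval_C (t : K) (a : A) : scalarEval t (C a) = a := eval₂_C _ _

@[simp]
theorem scalarEval_X (t : K) : scalarEval t (X : A[X]) = algebraMap K A t := eval₂_X _ _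

theorem scalarEval_map {A' : Type*} [Semiring A'] [Algebra K A'] (φ : A →ₐ[K] A') (t : K)
    (p : A[X]) : scalarEval t (p.map (φ : A →+* A')) = φ (scalarEval t p) := by
  rw [scalarEval_apply, scalarEval_apply, eval_map, eval]
  change _ = (φ : A →+* A') _
  rw [hom_eval₂, RingHom.comp_id, RingHom.coe_coe, AlgHom.commutes]

end ScalarEval

variable {K A : Type*} [Field K] [Ring A] [Algebra K A]

theorem eq_zero_of_infinite_scalarEval_eq_zero {p : A[X]} {T : Set K} (hT : T.Infinite)
    (h : ∀ t ∈ T, scalarEval t p = 0) : p = 0 := by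
  ext n
  refine (Module.forall_dual_apply_eq_zero_iff K _).1 fun φ => ?_
  set q : K[X] := ∑ k ∈ p.support, C (φ (p.coeff k)) * X ^ k
  have hq : q = 0 := by
    refine eq_zero_of_infinite_isRoot q (hT.mono fun t ht => ?_)
    have := congrArg φ (h t ht)
    have hterm (k : ℕ) : φ (p.coeff k * algebraMap K A t ^ k) = φ (p.coeff k) * t ^ k := by
      rw [← map_pow, ← Algebra.commutes, ← Algebra.smul_def, map_smul, smul_eq_mul, mul_comm]
    rw [scalarEval_apply, eval_eq_sum, sum_def, map_sum] at this
    simp only [hterm] at this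
    simpa [q, eval_finsetSum] using this
  by_cases hn : p.coeff n = 0
  · rw [hn, map_zero]
  · simpa [q, finsetSum_coeff, coeff_C_mul, coeff_X_pow, hn] using congrArg (coeff · n) hq

theorem commute_coeff_of_infinite_commute_scalarEval {p : A[X]} {b : A} {T : Set K}
    (hT : T.Infinite) (h : ∀ t ∈ T, Commute (scalarEval t p) b) (n : ℕ) :
    Commute (p.coeff n) b := by
  have hpb : p * C b - C b * p = 0 :=
    eq_zero_of_infinite_scalarEval_eq_zero hT fun t ht => by
      simpa [sub_eq_zero] using (h t ht).eq
  simpa [sub_eq_zero, coeff_mul_C, coeff_C_mul, Commute, SemiconjBy]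
    using congrArg (coeff · n) hpb

end Polynomial

def RingEquiv.toRealAlgEquiv {A B : Type*} [Ring A] [Algebra ℝ A] [TopologicalSpace A]
    [ContinuousSMul ℝ A] [Ring B] [Algebra ℝ B] [TopologicalSpace B] [ContinuousSMul ℝ B]
    [T2Space B] (e : A ≃+* B) (he : Continuous e) : A ≃ₐ[ℝ] B :=
  AlgEquiv.ofRingEquiv (f := e) fun t => by
    rw [Algebra.algebraMap_eq_smul_one, Algebra.algebraMap_eq_smul_one, map_real_smul e he,
      map_one]

def HasCentralPower {M : Type*} [Monoid M] (a : M) : Prop :=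
  ∃ n, 0 < n ∧ ∀ b, Commute (a ^ n) b

section CentralPowers

variable {B : Type*} [Ring B] [Algebra ℝ B]

theorem commute_of_forall_hasCentralPower (h : ∀ a : B, HasCentralPower a) (x y : B) :
    Commute x y := by
  obtain ⟨n, hn⟩ := Set.exists_infinite_setOf_of_not_countable Cardinal.not_countable_real
    fun t _ => h (algebraMap ℝ B t + x)
  obtain ⟨t₀, -, hn₀, -⟩ := hn.nonempty
  have hcoeff := commute_coeff_of_infinite_commute_scalarEval (p := (X + C x) ^ n) hn
    (fun t ht => by simpa using ht.2.2 y) (n - 1)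
  rw [coeff_X_add_C_pow, Nat.sub_sub_self hn₀, pow_one, Nat.choose_symm hn₀, Nat.choose_one_right,
    ← nsmul_eq_mul', ← Nat.cast_smul_eq_nsmul ℝ] at hcoeff
  exact (Commute.smul_left_iff₀ (Nat.cast_ne_zero.2 hn₀.ne')).1 hcoeff

variable [TopologicalSpace B] [ContinuousAdd B] [ContinuousSMul ℝ B]

theorem hasCentralPower_of_isOpen {U : Set B} (hU : IsOpen U) (hne : U.Nonempty)
    (h : ∀ y ∈ U, HasCentralPower y) (a : B) : HasCentralPower a := by
  obtain ⟨y₀, hy₀⟩ := hne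
  obtain ⟨n, hn⟩ := Set.exists_infinite_setOf_of_not_countable
    (not_countable_setOf_smul_add_mem hU hy₀ a) fun t ht => h _ ht
  obtain ⟨t₀, -, hn₀, -⟩ := hn.nonempty
  refine ⟨n, hn₀, fun b => ?_⟩
  have hcoeff := commute_coeff_of_infinite_commute_scalarEval (p := (C a * X + C y₀) ^ n) hn
    (fun t ht => by simpa [Algebra.smul_def, Algebra.commutes] using ht.2.2 b) (n * 1)
  rwa [coeff_pow_of_natDegree_le natDegree_linear_le, coeff_add, coeff_C_mul_X, coeff_C,
    if_pos rfl, if_neg one_ne_zero, add_zero] at hcoeff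

theorem hasCentralPower_of_central_map_anticomm_sub_comm (φ : B ≃ₐ[ℝ] B) {U : Set B}
    (hU : IsOpen U) (hne : U.Nonempty) {y : B}
    (h : ∀ x ∈ U, ∃ p q : ℕ, 0 < q ∧ ∀ b,
      Commute (φ (x ^ p * y ^ q + y ^ q * x ^ p) - (x ^ p * y ^ q - y ^ q * x ^ p)) b) :
    HasCentralPower y := by
  obtain ⟨x₀, hx₀⟩ := hne
  obtain ⟨⟨p, q⟩, hpq⟩ := Set.exists_infinite_setOf_of_not_countable
    (not_countable_setOf_smul_add_mem hU hx₀ 1)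
    (P := fun t (pq : ℕ × ℕ) => 0 < pq.2 ∧ ∀ b, Commute (φ ((t • 1 + x₀) ^ pq.1 * y ^ pq.2 +
      y ^ pq.2 * (t • 1 + x₀) ^ pq.1) - ((t • 1 + x₀) ^ pq.1 * y ^ pq.2 -
      y ^ pq.2 * (t • 1 + x₀) ^ pq.1)) b) fun t ht => by
        obtain ⟨p, q, hpq⟩ := h _ ht
        exact ⟨(p, q), hpq⟩
  obtain ⟨t₀, -, hq, -⟩ := hpq.nonempty
  refine ⟨q, hq, fun b => ?_⟩
  set P : B[X] := (X + C x₀) ^ p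
  set Y := y ^ q
  have hcoeff := commute_coeff_of_infinite_commute_scalarEval
    (p := (P * C Y + C Y * P).map (φ : B →+* B) - (P * C Y - C Y * P)) hpq
    (fun t ht => by
      simpa [P, scalarEval_map, Algebra.algebraMap_eq_smul_one] using ht.2.2 (φ b)) p
  have hP : P.coeff p = 1 := by simp [P, coeff_X_add_C_pow]
  simp only [coeff_sub, coeff_map, coeff_add, coeff_mul_C, coeff_C_mul, hP, one_mul, mul_one,
    sub_self, sub_zero, RingHom.coe_coe] at hcoeff
  rw [commute_map_iff φ.injective, ← two_smul ℝ] at hcoeff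
  exact (Commute.smul_left_iff₀ two_ne_zero).1 hcoeff

end CentralPowers

theorem prime_banach_comm_of_auto_anticomm_sub_comm_general
    {B : Type*} [NormedRing B] [NormedAlgebra ℝ B]
    (H₁ H₂ : Set B) (hH₁ : H₁.Nonempty) (hH₂ : H₂.Nonempty)
    (hH₁o : IsOpen H₁) (hH₂o : IsOpen H₂)
    (f : B → B) (hfcont : Continuous f) (hfbij : Function.Bijective f)
    (hfadd : ∀ x y : B, f (x + y) = f x + f y)
    (hfmul : ∀ x y : B, f (x * y) = f x * f y)
    (hmain : ∀ x ∈ H₁, ∀ y ∈ H₂, ∃ p q : ℕ, 0 < p ∧ 0 < q ∧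
      ∀ b : B, (f (x ^ p * y ^ q + y ^ q * x ^ p) - (x ^ p * y ^ q - y ^ q * x ^ p)) * b
        = b * (f (x ^ p * y ^ q + y ^ q * x ^ p) - (x ^ p * y ^ q - y ^ q * x ^ p))) :
    ∀ x y : B, x * y = y * x := by
  let φ : B ≃ₐ[ℝ] B := RingEquiv.toRealAlgEquiv
    { Equiv.ofBijective f hfbij with map_mul' := hfmul, map_add' := hfadd } hfcont
  have hH₂central : ∀ y ∈ H₂, HasCentralPower y := fun y hy =>
    hasCentralPower_of_central_map_anticomm_sub_comm φ hH₁o hH₁ fun x hx => by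
      obtain ⟨p, q, -, hq, hpq⟩ := hmain x hx y hy
      exact ⟨p, q, hq, hpq⟩
  exact commute_of_forall_hasCentralPower (hasCentralPower_of_isOpen hH₂o hH₂ hH₂central)

/-- Theorem: a prime real Banach algebra admitting a continuous automorphism `f` with
`f(x^p ∘ y^q) − [x^p, y^q] ∈ Z(B)` on a product of nonempty open sets is commutative. -/
theorem prime_banach_comm_of_auto_anticomm_sub_comm
    {B : Type*} [NormedRing B] [NormedAlgebra ℝ B] [CompleteSpace B]
    (hprime : ∀ x y : B, (∀ z : B, x * z * y = 0) → x = 0 ∨ y = 0)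
    (H₁ H₂ : Set B) (hH₁ : H₁.Nonempty) (hH₂ : H₂.Nonempty)
    (hH₁o : IsOpen H₁) (hH₂o : IsOpen H₂)
    (f : B → B) (hfcont : Continuous f) (hfbij : Function.Bijective f)
    (hfadd : ∀ x y : B, f (x + y) = f x + f y)
    (hfmul : ∀ x y : B, f (x * y) = f x * f y)
    (hmain : ∀ x ∈ H₁, ∀ y ∈ H₂, ∃ p q : ℕ, 0 < p ∧ 0 < q ∧
      ∀ b : B, (f (x ^ p * y ^ q + y ^ q * x ^ p) - (x ^ p * y ^ q - y ^ q * x ^ p)) * b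
        = b * (f (x ^ p * y ^ q + y ^ q * x ^ p) - (x ^ p * y ^ q - y ^ q * x ^ p))) :
    ∀ x y : B, x * y = y * x :=
  prime_banach_comm_of_auto_anticomm_sub_comm_general H₁ H₂ hH₁ hH₂ hH₁o hH₂o f hfcont hfbij hfadd
    hfmul hmain
end

section
/- Let B be a prime Banach algebra over ℝ, let D be a dense subset of B, and let f : B → B be a continuous automorphism. Suppose there exist fixed positive integers p ≥ 1 and q ≥ 1 such that f(xᵖ∘yᵠ) + [xᵖ, yᵠ] ∈ Z(B) for all x, y ∈ D. Then B is commutative. -/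
/-!
An additive continuous `f` is `ℝ`-linear and centrality is a closed condition, so the identity
extends from `D` to all of `B`. The coefficient of `t` in `(1 + t x) ^ q` is `q x`, so a linear
condition holding on all `q`-th powers holds everywhere: the exponents can be dropped, and
`f (x ∘ y) + [x, y]` is central for all `x, y`. Subtracting the same with `x, y` swapped shows
that every commutator `c = [x, y]` is central. Then `x c = [x, x y]` is central too, whence
`c ^ 2 = [x, y] c = 0`, so `c z c = z c ^ 2 = 0` for all `z` and primeness gives `c = 0`.
-/

open Finset

open Polynomial in
theorem eq_zero_of_forall_sum_pow_smul_eq_zero {K V : Type*} [Field K] [Infinite K]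
    [AddCommGroup V] [Module K V] {n : ℕ} {a : ℕ → V}
    (h : ∀ t : K, ∑ k ∈ range n, t ^ k • a k = 0) {k : ℕ} (hk : k < n) : a k = 0 := by
  refine (Module.forall_dual_apply_eq_zero_iff K (a k)).mp fun φ => ?_
  have hP : ∑ i ∈ range n, C (φ (a i)) * X ^ i = 0 :=
    Polynomial.funext fun t => by
      simpa only [eval_finsetSum, eval_mul, eval_C, eval_pow, eval_X, eval_zero, map_sum, map_smul,
        smul_eq_mul, mul_comm, map_zero] using congrArg φ (h t)
  simpa [finsetSum_coeff, coeff_C_mul_X_pow, hk] using congrArg (coeff · k) hP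

theorem Submodule.eq_top_of_forall_pow_mem {K A : Type*} [Field K] [CharZero K] [Ring A]
    [Algebra K A] (M : Submodule K A) {q : ℕ} (hq : q ≠ 0) (h : ∀ x : A, x ^ q ∈ M) :
    M = ⊤ := by
  refine eq_top_iff'.mpr fun x => ?_
  have hexpand (t : K) :
      (1 + t • x) ^ q = ∑ k ∈ range (q + 1), t ^ k • (q.choose k : K) • x ^ k := by
    rw [add_comm, (Commute.one_right (t • x)).add_pow q]
    refine sum_congr rfl fun k _ => ?_
    rw [one_pow, mul_one, smul_pow, ← Nat.cast_comm, ← map_natCast (algebraMap K A),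
      ← Algebra.smul_def, smul_comm]
  have hpoly (t : K) :
      ∑ k ∈ range (q + 1), t ^ k • M.mkQ ((q.choose k : K) • x ^ k) = 0 := by
    have := (Quotient.mk_eq_zero M).mpr (h (1 + t • x))
    rw [hexpand, ← mkQ_apply, map_sum] at this
    simpa only [map_smul] using this
  have hlinear := eq_zero_of_forall_sum_pow_smul_eq_zero hpoly (by omega : 1 < q + 1)
  simpa [Nat.cast_ne_zero.mpr hq] using hlinear

theorem LinearMap.apply_mem_of_forall_apply_pow_pow_mem {K A M : Type*} [Field K] [CharZero K]
    [Ring A] [Algebra K A] [AddCommGroup M] [Module K M] (Φ : A →ₗ[K] A →ₗ[K] M)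
    (C : Submodule K M) {p q : ℕ} (hp : p ≠ 0) (hq : q ≠ 0)
    (h : ∀ x y, Φ (x ^ p) (y ^ q) ∈ C) (x y : A) : Φ x y ∈ C := by
  have hleft (x y : A) : Φ (x ^ p) y ∈ C :=
    Submodule.eq_top_iff'.mp ((C.comap (Φ (x ^ p))).eq_top_of_forall_pow_mem hq (h x)) y
  exact Submodule.eq_top_iff'.mp ((C.comap (Φ.flip y)).eq_top_of_forall_pow_mem hp (hleft · y)) x

section anticommAddComm

variable {R A : Type*} [CommRing R] [Ring A] [Algebra R A]

def LinearMap.anticommAddComm (L : A →ₗ[R] A) : A →ₗ[R] A →ₗ[R] A :=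
  (mul R A + (mul R A).flip).compr₂ L + (mul R A - (mul R A).flip)

@[simp]
theorem LinearMap.anticommAddComm_apply (L : A →ₗ[R] A) (x y : A) :
    L.anticommAddComm x y = L (x * y + y * x) + (x * y - y * x) := by
  simp [anticommAddComm]

end anticommAddComm

theorem commutator_mem_center_of_anticommAddComm_mem_center {K A : Type*} [Field K]
    [NeZero (2 : K)] [Ring A] [Algebra K A] (L : A →ₗ[K] A)
    (h : ∀ x y, L.anticommAddComm x y ∈ Subalgebra.center K A) (x y : A) :
    x * y - y * x ∈ Subalgebra.center K A := by
  have hsub : L.anticommAddComm x y - L.anticommAddComm y x = (2 : K) • (x * y - y * x) := by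
    simp only [LinearMap.anticommAddComm_apply, add_comm (y * x), two_smul]
    abel
  have h2 : (2 : K) • (x * y - y * x) ∈ Subalgebra.toSubmodule (Subalgebra.center K A) :=
    hsub ▸ sub_mem (h x y) (h y x)
  exact (Submodule.smul_mem_iff _ two_ne_zero).mp h2

theorem mul_comm_of_commutator_mem_center {R : Type*} [Ring R]
    (hprime : ∀ x y : R, (∀ z, x * z * y = 0) → x = 0 ∨ y = 0)
    (h : ∀ x y : R, x * y - y * x ∈ Set.center R) (x y : R) : x * y = y * x := by
  set c := x * y - y * x
  have hc (z : R) : z * c = c * z := Semigroup.mem_center_iff.mp (h x y) z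
  have hxc (z : R) : z * (x * c) = x * c * z := by
    have : x * (x * y) - x * y * x = x * c := by simp only [c]; noncomm_ring
    exact this ▸ Semigroup.mem_center_iff.mp (h x (x * y)) z
  have hcc : c * c = 0 := by
    calc c * c = (x * y - y * x) * c := rfl
      _ = x * c * y - y * (x * c) := by
        rw [sub_mul, mul_assoc x, hc y, ← mul_assoc x, mul_assoc y]
      _ = 0 := by rw [hxc, sub_self]
  have hczc (z : R) : c * z * c = 0 := by rw [mul_assoc, hc, ← mul_assoc, hcc, zero_mul]
  simpa [c, sub_eq_zero] using hprime c c hczc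

theorem prime_banach_comm_of_auto_dense_general
    {B : Type*} [NormedRing B] [NormedAlgebra ℝ B]
    (hprime : ∀ x y : B, (∀ z : B, x * z * y = 0) → x = 0 ∨ y = 0)
    (D : Set B) (hD : Dense D)
    (f : B → B) (hfcont : Continuous f)
    (hfadd : ∀ x y : B, f (x + y) = f x + f y)
    (p q : ℕ) (hp : 0 < p) (hq : 0 < q)
    (hmain : ∀ x ∈ D, ∀ y ∈ D,
      ∀ b : B, (f (x ^ p * y ^ q + y ^ q * x ^ p) + (x ^ p * y ^ q - y ^ q * x ^ p)) * b
        = b * (f (x ^ p * y ^ q + y ^ q * x ^ p) + (x ^ p * y ^ q - y ^ q * x ^ p))) :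
    ∀ x y : B, x * y = y * x := by
  let L : B →L[ℝ] B := (AddMonoidHom.mk' f hfadd).toRealLinearMap hfcont
  let Φ := (L : B →ₗ[ℝ] B).anticommAddComm
  have hcont : Continuous fun v : B × B => Φ (v.1 ^ p) (v.2 ^ q) := by
    simp only [Φ, LinearMap.anticommAddComm_apply, ContinuousLinearMap.coe_coe]
    fun_prop
  have hclosed : IsClosed (Set.center B) := Set.centralizer_univ B ▸ Set.isClosed_centralizer _
  have hpow (v : B × B) : Φ (v.1 ^ p) (v.2 ^ q) ∈ Set.center B :=
    (hD.prod hD).induction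
      (fun w hw => Semigroup.mem_center_iff.mpr fun b => (hmain _ hw.1 _ hw.2 b).symm)
      (hclosed.preimage hcont) v
  have hall : ∀ x y, Φ x y ∈ (Subalgebra.center ℝ B).toSubmodule :=
    Φ.apply_mem_of_forall_apply_pow_pow_mem _ hp.ne' hq.ne' fun x y => hpow (x, y)
  have hcomm := commutator_mem_center_of_anticommAddComm_mem_center (L : B →ₗ[ℝ] B) hall
  exact mul_comm_of_commutator_mem_center hprime hcomm

/-- Corollary: a prime real Banach algebra with a continuous automorphism `f` satisfying
`f(x^p ∘ y^q) + [x^p, y^q] ∈ Z(B)` for fixed `p, q ≥ 1` and all `x, y` in a dense set `D`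
is commutative. -/
theorem prime_banach_comm_of_auto_dense
    {B : Type*} [NormedRing B] [NormedAlgebra ℝ B] [CompleteSpace B]
    (hprime : ∀ x y : B, (∀ z : B, x * z * y = 0) → x = 0 ∨ y = 0)
    (D : Set B) (hD : Dense D)
    (f : B → B) (hfcont : Continuous f) (hfbij : Function.Bijective f)
    (hfadd : ∀ x y : B, f (x + y) = f x + f y)
    (hfmul : ∀ x y : B, f (x * y) = f x * f y)
    (p q : ℕ) (hp : 0 < p) (hq : 0 < q)
    (hmain : ∀ x ∈ D, ∀ y ∈ D,
      ∀ b : B, (f (x ^ p * y ^ q + y ^ q * x ^ p) + (x ^ p * y ^ q - y ^ q * x ^ p)) * b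
        = b * (f (x ^ p * y ^ q + y ^ q * x ^ p) + (x ^ p * y ^ q - y ^ q * x ^ p))) :
    ∀ x y : B, x * y = y * x :=
  prime_banach_comm_of_auto_dense_general hprime D hD f hfcont hfadd p q hp hq hmain
end

section
/- Let B be a prime Banach algebra over ℝ, let H₁ and H₂ be non-empty open subsets of B, let d : B → B be a non-injective derivation, and let F : B → B be a continuous generalized derivation associated with d. Suppose that for every (x, y) ∈ H₁ × H₂ there exist positive integers p = p(x,y) ≥ 1 and q = q(x,y) ≥ 1 such that F(xᵖ∘yᵠ) + [xᵖ, yᵠ] ∈ Z(B). Then B is commutative or d(Z(B)) = {0}. -/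
open Finset Metric

namespace GenDerAux

variable {B : Type*} [NormedRing B] [NormedAlgebra ℝ B]

/-- Coefficients of a `B`-valued polynomial function vanishing near `0` are zero. -/
lemma coeffs_eq_zero : ∀ (n : ℕ) (c : ℕ → B) (ε : ℝ), 0 < ε →
    (∀ t : ℝ, |t| < ε → ∑ k ∈ Finset.range n, t ^ k • c k = 0) → ∀ k < n, c k = 0 := by
  intro n
  induction n with
  | zero => exact fun c ε hε h k hk => absurd hk (Nat.not_lt_zero k)
  | succ n ih =>
    intro c ε hε h
    have h0 : c 0 = 0 := by
      have h00 := h 0 (by simpa using hε)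
      rw [Finset.sum_eq_single 0 (fun k _ hk => by rw [zero_pow hk, zero_smul])
        (fun hx => absurd (Finset.mem_range.2 (Nat.succ_pos n)) hx)] at h00
      simpa using h00
    have hne : ∀ t : ℝ, |t| < ε → t ≠ 0 →
        ∑ k ∈ Finset.range n, t ^ k • c (k + 1) = 0 := by
      intro t ht htne
      have h1 := h t ht
      rw [Finset.sum_range_succ'] at h1
      simp only [pow_zero, one_smul, h0, add_zero] at h1
      have h2 : ∑ k ∈ Finset.range n, t ^ (k + 1) • c (k + 1)
          = t • ∑ k ∈ Finset.range n, t ^ k • c (k + 1) := by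
        rw [Finset.smul_sum]
        exact Finset.sum_congr rfl fun k _ => by rw [smul_smul, ← pow_succ']
      rw [h2] at h1
      have h3 := congrArg (fun v => t⁻¹ • v) h1
      simpa [smul_smul, inv_mul_cancel₀ htne] using h3
    have hzero : ∀ t : ℝ, |t| < ε → ∑ k ∈ Finset.range n, t ^ k • c (k + 1) = 0 := by
      intro t ht
      rcases eq_or_ne t 0 with rfl | htne
      · have hcont : Continuous fun t : ℝ => ∑ k ∈ Finset.range n, t ^ k • c (k + 1) :=
          continuous_finset_sum _ fun k _ => (continuous_pow k).smul continuous_const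
      
        have l1 : Filter.Tendsto (fun t : ℝ => ∑ k ∈ Finset.range n, t ^ k • c (k + 1))
            (nhdsWithin 0 (Set.Ioi 0)) (nhds (∑ k ∈ Finset.range n, (0:ℝ) ^ k • c (k + 1))) :=
          (hcont.tendsto 0).mono_left nhdsWithin_le_nhds
        have l2 : Filter.Tendsto (fun t : ℝ => ∑ k ∈ Finset.range n, t ^ k • c (k + 1))
            (nhdsWithin 0 (Set.Ioi 0)) (nhds 0) := by
          refine Filter.Tendsto.congr' ?_ tendsto_const_nhds
          filter_upwards [Ioo_mem_nhdsGT_of_mem (Set.mem_Ico.2 ⟨le_refl (0:ℝ), hε⟩)] with s hs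
          exact (hne s (by rw [abs_of_pos hs.1]; exact hs.2) hs.1.ne').symm
        exact tendsto_nhds_unique l1 l2
      · exact hne t ht htne
    intro k hk
    cases k with
    | zero => exact h0
    | succ k => exact ih (fun k => c (k + 1)) ε hε hzero k (by omega)

/-- A `B`-valued polynomial function of a real variable. -/
def IsPolyFun (f : ℝ → B) : Prop :=
  ∃ n : ℕ, ∃ c : ℕ → B, ∀ t, f t = ∑ k ∈ Finset.range n, t ^ k • c k

lemma IsPolyFun.congr {f g : ℝ → B} (h : IsPolyFun f) (hfg : ∀ t, f t = g t) :
    IsPolyFun g := by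
  obtain ⟨n, c, hc⟩ := h
  exact ⟨n, c, fun t => (hfg t) ▸ hc t⟩

lemma isPolyFun_const (v : B) : IsPolyFun fun _ : ℝ => v :=
  ⟨1, fun _ => v, fun t => by simp⟩

lemma IsPolyFun.comp_linear {f : ℝ → B} (h : IsPolyFun f) (L : B → B)
    (hLadd : ∀ a b, L (a + b) = L a + L b) (hLsmul : ∀ (r : ℝ) v, L (r • v) = r • L v) :
    IsPolyFun fun t => L (f t) := by
  obtain ⟨n, c, hc⟩ := h
  refine ⟨n, fun k => L (c k), fun t => ?_⟩
  show L (f t) = _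
  rw [hc]
  have hms : L (∑ k ∈ Finset.range n, t ^ k • c k)
      = ∑ k ∈ Finset.range n, L (t ^ k • c k) :=
    map_sum (AddMonoidHom.mk' L hLadd) (fun k => t ^ k • c k) (Finset.range n)
  rw [hms]
  exact Finset.sum_congr rfl fun k _ => hLsmul _ _

lemma sum_pad (n m : ℕ) (hnm : n ≤ m) (c : ℕ → B) (t : ℝ) :
    ∑ k ∈ Finset.range m, t ^ k • (if k < n then c k else 0)
      = ∑ k ∈ Finset.range n, t ^ k • c k := by
  rw [← Finset.sum_subset (Finset.range_subset_range.2 hnm)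
    (fun k _ hk => by rw [if_neg (by simpa using hk), smul_zero])]
  exact Finset.sum_congr rfl fun k hk => by rw [if_pos (Finset.mem_range.1 hk)]

lemma IsPolyFun.add {f g : ℝ → B} (hf : IsPolyFun f) (hg : IsPolyFun g) :
    IsPolyFun fun t => f t + g t := by
  obtain ⟨n₁, c₁, hc₁⟩ := hf
  obtain ⟨n₂, c₂, hc₂⟩ := hg
  refine ⟨max n₁ n₂, fun k => (if k < n₁ then c₁ k else 0) + (if k < n₂ then c₂ k else 0),
    fun t => ?_⟩
  simp only [smul_add]
  rw [Finset.sum_add_distrib, sum_pad n₁ _ (le_max_left _ _), sum_pad n₂ _ (le_max_right _ _),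
    hc₁, hc₂]

lemma IsPolyFun.neg {f : ℝ → B} (hf : IsPolyFun f) : IsPolyFun fun t => -(f t) :=
  hf.comp_linear Neg.neg (fun a b => neg_add a b) (fun r v => (smul_neg r v).symm)

lemma IsPolyFun.sub {f g : ℝ → B} (hf : IsPolyFun f) (hg : IsPolyFun g) :
    IsPolyFun fun t => f t - g t :=
  (hf.add hg.neg).congr fun t => (sub_eq_add_neg _ _).symm

lemma IsPolyFun.mul_right {f : ℝ → B} (hf : IsPolyFun f) (v : B) :
    IsPolyFun fun t => f t * v :=
  hf.comp_linear (· * v) (fun a b => add_mul a b v) (fun r u => smul_mul_assoc r u v)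

lemma IsPolyFun.mul_left {f : ℝ → B} (hf : IsPolyFun f) (v : B) :
    IsPolyFun fun t => v * f t :=
  hf.comp_linear (v * ·) (fun a b => mul_add v a b) (fun r u => mul_smul_comm r v u)

lemma IsPolyFun.shift {f : ℝ → B} (hf : IsPolyFun f) : IsPolyFun fun t => t • f t := by
  obtain ⟨n, c, hc⟩ := hf
  refine ⟨n + 1, fun k => if k = 0 then 0 else c (k - 1), fun t => ?_⟩
  show t • f t = _
  rw [hc, Finset.sum_range_succ' (fun k => t ^ k • (if k = 0 then (0:B) else c (k - 1))) n,
    Finset.smul_sum]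
  simp only [pow_zero, one_smul, if_pos rfl, add_zero]
  simp only [if_true, add_zero, Nat.succ_ne_zero, if_false, Nat.add_sub_cancel]
  refine Finset.sum_congr rfl fun k _ => ?_
  rw [smul_smul, ← pow_succ']

lemma isPolyFun_affine (v w : B) : IsPolyFun fun t : ℝ => v + t • w :=
  (isPolyFun_const v).add (isPolyFun_const w).shift

lemma IsPolyFun.mul_affine {f : ℝ → B} (hf : IsPolyFun f) (v w : B) :
    IsPolyFun fun t => f t * (v + t • w) := by
  have h1 : IsPolyFun fun t => f t * v := hf.mul_right v
  have h2 : IsPolyFun fun t => t • (f t * w) := (hf.mul_right w).shift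
  exact (h1.add h2).congr fun t => by rw [mul_add, mul_smul_comm]

lemma isPolyFun_affine_pow (v w : B) (p : ℕ) : IsPolyFun fun t : ℝ => (v + t • w) ^ p := by
  induction p with
  | zero => exact (isPolyFun_const 1).congr fun t => by simp
  | succ p ih => exact (ih.mul_affine v w).congr fun t => (pow_succ _ _).symm

/-- The expression `F(x^p ∘ y^q) + [x^p, y^q]`. -/
def Psi (F : B → B) (p q : ℕ) (x y : B) : B :=
  F (x ^ p * y ^ q + y ^ q * x ^ p) + (x ^ p * y ^ q - y ^ q * x ^ p)

lemma polyZero {f : ℝ → B} (hf : IsPolyFun f) {δ : ℝ} (hδ : 0 < δ)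
    (hz : ∀ t : ℝ, |t| < δ → f t = 0) : ∀ t, f t = 0 := by
  obtain ⟨n, c, hc⟩ := hf
  have hcz := coeffs_eq_zero n c δ hδ (fun s hs => by rw [← hc s]; exact hz s hs)
  intro t
  rw [hc t]
  exact Finset.sum_eq_zero fun k hk => by rw [hcz k (Finset.mem_range.1 hk), smul_zero]

lemma psi_poly_x (F : B → B) (hFadd : ∀ x y : B, F (x + y) = F x + F y)
    (hFsmul : ∀ (r : ℝ) (v : B), F (r • v) = r • F v) (p q : ℕ) (v w y b : B) :
    IsPolyFun fun t : ℝ =>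
      Psi F p q (v + t • w) y * b - b * Psi F p q (v + t • w) y := by
  have hA : IsPolyFun fun t : ℝ => (v + t • w) ^ p := isPolyFun_affine_pow v w p
  have h1 : IsPolyFun fun t : ℝ => (v + t • w) ^ p * y ^ q := hA.mul_right _
  have h2 : IsPolyFun fun t : ℝ => y ^ q * (v + t • w) ^ p := hA.mul_left _
  have hF := (h1.add h2).comp_linear F hFadd hFsmul
  have hΨ := hF.add (h1.sub h2)
  exact hΨ.comp_linear (fun u => u * b - b * u)
    (fun a a' => by noncomm_ring)
    (fun r u => by
      show r • u * b - b * (r • u) = r • (u * b - b * u)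
      rw [smul_mul_assoc, mul_smul_comm, smul_sub])

lemma psi_poly_y (F : B → B) (hFadd : ∀ x y : B, F (x + y) = F x + F y)
    (hFsmul : ∀ (r : ℝ) (v : B), F (r • v) = r • F v) (p q : ℕ) (x v w b : B) :
    IsPolyFun fun t : ℝ =>
      Psi F p q x (v + t • w) * b - b * Psi F p q x (v + t • w) := by
  have hA : IsPolyFun fun t : ℝ => (v + t • w) ^ q := isPolyFun_affine_pow v w q
  have h1 : IsPolyFun fun t : ℝ => x ^ p * (v + t • w) ^ q := hA.mul_left _
  have h2 : IsPolyFun fun t : ℝ => (v + t • w) ^ q * x ^ p := hA.mul_right _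
  have hF := (h1.add h2).comp_linear F hFadd hFsmul
  have hΨ := hF.add (h1.sub h2)
  exact hΨ.comp_linear (fun u => u * b - b * u)
    (fun a a' => by noncomm_ring)
    (fun r u => by
      show r • u * b - b * (r • u) = r • (u * b - b * u)
      rw [smul_mul_assoc, mul_smul_comm, smul_sub])

lemma global_identity [CompleteSpace B]
    (H₁ H₂ : Set B) (hH₁ : H₁.Nonempty) (hH₂ : H₂.Nonempty)
    (hH₁o : IsOpen H₁) (hH₂o : IsOpen H₂)
    (F : B → B) (hFcont : Continuous F)
    (hFadd : ∀ x y : B, F (x + y) = F x + F y)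
    (hmain : ∀ x ∈ H₁, ∀ y ∈ H₂, ∃ p q : ℕ, 0 < p ∧ 0 < q ∧
      ∀ b : B, Psi F p q x y * b = b * Psi F p q x y) :
    ∃ p q : ℕ, 0 < p ∧ 0 < q ∧ ∀ x y b : B, Psi F p q x y * b = b * Psi F p q x y := by
  have hFsmul : ∀ (r : ℝ) (v : B), F (r • v) = r • F v := fun r v =>
    map_real_smul (AddMonoidHom.mk' F hFadd) hFcont r v
  set U : Set (B × B) := H₁ ×ˢ H₂ with hUdef
  have hUo : IsOpen U := hH₁o.prod hH₂o
  have hUne : U.Nonempty := hH₁.prod hH₂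
  set K : ℕ × ℕ → Set (B × B) := fun n =>
    {w : B × B | ∀ b : B, Psi F (n.1 + 1) (n.2 + 1) w.1 w.2 * b
      = b * Psi F (n.1 + 1) (n.2 + 1) w.1 w.2} ∪ Uᶜ with hKdef
  have hΨcont : ∀ p q : ℕ, Continuous fun w : B × B => Psi F p q w.1 w.2 := by
    intro p q
    unfold Psi
    exact (hFcont.comp (((continuous_fst.pow p).mul (continuous_snd.pow q)).add
      ((continuous_snd.pow q).mul (continuous_fst.pow p)))).add
      (((continuous_fst.pow p).mul (continuous_snd.pow q)).sub
      ((continuous_snd.pow q).mul (continuous_fst.pow p)))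
  have hKc : ∀ n, IsClosed (K n) := by
    intro n
    refine IsClosed.union ?_ hUo.isClosed_compl
    have he : {w : B × B | ∀ b : B, Psi F (n.1 + 1) (n.2 + 1) w.1 w.2 * b
        = b * Psi F (n.1 + 1) (n.2 + 1) w.1 w.2}
        = ⋂ b : B, {w : B × B | Psi F (n.1 + 1) (n.2 + 1) w.1 w.2 * b
        = b * Psi F (n.1 + 1) (n.2 + 1) w.1 w.2} := by
      ext w; simp [Set.mem_iInter]
    rw [he]
    exact isClosed_iInter fun b => isClosed_eq
      ((hΨcont _ _).mul continuous_const) (continuous_const.mul (hΨcont _ _))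
  have hKu : ⋃ n, K n = Set.univ := by
    ext w
    simp only [Set.mem_iUnion, Set.mem_univ, iff_true]
    by_cases hw : w ∈ U
    · obtain ⟨p, q, hp, hq, hb⟩ := hmain w.1 hw.1 w.2 hw.2
      refine ⟨(p - 1, q - 1), Or.inl ?_⟩
      intro b
      simpa [Nat.sub_add_cancel hp, Nat.sub_add_cancel hq] using hb b
    · exact ⟨(0, 0), Or.inr hw⟩
  have hdense := dense_iUnion_interior_of_closed hKc hKu
  obtain ⟨w, hw1, hw2⟩ := hdense.exists_mem_open hUo hUne
  obtain ⟨n, hn⟩ := Set.mem_iUnion.1 hw1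
  obtain ⟨ε, hε, hball⟩ := Metric.isOpen_iff.1 (isOpen_interior.inter hUo) w ⟨hn, hw2⟩
  refine ⟨n.1 + 1, n.2 + 1, Nat.succ_pos _, Nat.succ_pos _, ?_⟩
  have hloc : ∀ x ∈ ball w.1 ε, ∀ y ∈ ball w.2 ε, ∀ b : B,
      Psi F (n.1 + 1) (n.2 + 1) x y * b = b * Psi F (n.1 + 1) (n.2 + 1) x y := by
    intro x hx y hy
    have hxy : (x, y) ∈ ball w ε := by
      rw [← Prod.mk.eta (p := w), ← ball_prod_same]
      exact ⟨hx, hy⟩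
    have hmem := hball hxy
    rcases interior_subset hmem.1 with h | h
    · exact h
    · exact absurd hmem.2 h
  have hstep1 : ∀ (x : B), ∀ y ∈ ball w.2 ε, ∀ b : B,
      Psi F (n.1 + 1) (n.2 + 1) x y * b = b * Psi F (n.1 + 1) (n.2 + 1) x y := by
    intro x y hy b
    have hpoly := psi_poly_x F hFadd hFsmul (n.1 + 1) (n.2 + 1) w.1 (x - w.1) y b
    have hδ : (0:ℝ) < ε / (‖x - w.1‖ + 1) := div_pos hε (by positivity)
    have hz : ∀ t : ℝ, |t| < ε / (‖x - w.1‖ + 1) →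
        Psi F (n.1 + 1) (n.2 + 1) (w.1 + t • (x - w.1)) y * b
          - b * Psi F (n.1 + 1) (n.2 + 1) (w.1 + t • (x - w.1)) y = 0 := by
      intro t ht
      rw [lt_div_iff₀ (by positivity)] at ht
      have hmem : w.1 + t • (x - w.1) ∈ ball w.1 ε := by
        rw [mem_ball, dist_eq_norm, add_sub_cancel_left, norm_smul, Real.norm_eq_abs]
        calc |t| * ‖x - w.1‖ ≤ |t| * (‖x - w.1‖ + 1) := by
              apply mul_le_mul_of_nonneg_left (by linarith) (abs_nonneg t)
          _ < ε := ht
      rw [hloc _ hmem y hy b, sub_self]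
    have h1 := polyZero hpoly hδ hz 1
    have hx1 : w.1 + (1:ℝ) • (x - w.1) = x := by rw [one_smul]; abel
    rw [hx1] at h1
    exact sub_eq_zero.mp h1
  intro x y b
  have hpoly := psi_poly_y F hFadd hFsmul (n.1 + 1) (n.2 + 1) x w.2 (y - w.2) b
  have hδ : (0:ℝ) < ε / (‖y - w.2‖ + 1) := div_pos hε (by positivity)
  have hz : ∀ t : ℝ, |t| < ε / (‖y - w.2‖ + 1) →
      Psi F (n.1 + 1) (n.2 + 1) x (w.2 + t • (y - w.2)) * b
        - b * Psi F (n.1 + 1) (n.2 + 1) x (w.2 + t • (y - w.2)) = 0 := by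
    intro t ht
    rw [lt_div_iff₀ (by positivity)] at ht
    have hmem : w.2 + t • (y - w.2) ∈ ball w.2 ε := by
      rw [mem_ball, dist_eq_norm, add_sub_cancel_left, norm_smul, Real.norm_eq_abs]
      calc |t| * ‖y - w.2‖ ≤ |t| * (‖y - w.2‖ + 1) := by
            apply mul_le_mul_of_nonneg_left (by linarith) (abs_nonneg t)
        _ < ε := ht
    rw [hstep1 x _ hmem b, sub_self]
  have h1 := polyZero hpoly hδ hz 1
  have hy1 : w.2 + (1:ℝ) • (y - w.2) = y := by rw [one_smul]; abel
  rw [hy1] at h1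
  exact sub_eq_zero.mp h1

lemma endgame
    (hprime : ∀ x y : B, (∀ z : B, x * z * y = 0) → x = 0 ∨ y = 0)
    (d : B → B) (hdadd : ∀ x y : B, d (x + y) = d x + d y)
    (hdmul : ∀ x y : B, d (x * y) = d x * y + x * d y)
    (F : B → B) (hFmul : ∀ x y : B, F (x * y) = F x * y + x * d y)
    (p q : ℕ) (hp : 0 < p)
    (hglob : ∀ x y b : B, Psi F p q x y * b = b * Psi F p q x y) :
    (∀ x y : B, x * y = y * x) ∨ (∀ z : B, (∀ b : B, z * b = b * z) → d z = 0) := by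
  have hd0 : d 0 = 0 := by
    have h := hdadd 0 0
    rw [add_zero] at h
    exact left_eq_add.mp h
  have hrcancel : ∀ r : ℝ, r ≠ 0 → ∀ v : B, r • v = 0 → v = 0 := by
    intro r hr v hv
    have h := congrArg (fun u => r⁻¹ • u) hv
    simpa [smul_smul, inv_mul_cancel₀ hr] using h
  have hcast : ∀ m : ℕ, 0 < m → ∀ v : B, m • v = 0 → v = 0 := by
    intro m hm v hv
    refine hrcancel (m : ℝ) (Nat.cast_ne_zero.2 hm.ne') v ?_
    rw [Nat.cast_smul_eq_nsmul ℝ m v, hv]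
  have hcenterd : ∀ z : B, (∀ b : B, z * b = b * z) → ∀ b : B, d z * b = b * d z := by
    intro z hz b
    have h3 : d z * b + z * d b = d b * z + b * d z := by
      rw [← hdmul, ← hdmul, hz b]
    rw [hz (d b), add_comm (d b * z)] at h3
    exact add_right_cancel h3
  have hcenterpow : ∀ z : B, (∀ b : B, z * b = b * z) →
      ∀ (m : ℕ) (b : B), z ^ m * b = b * z ^ m := by
    intro z hz m b
    induction m with
    | zero => simp
    | succ m ih => rw [pow_succ, mul_assoc, hz b, ← mul_assoc, ih, mul_assoc]
  have hnilz : ∀ (m : ℕ) (z : B), (∀ b : B, z * b = b * z) → z ^ m = 0 → z = 0 := by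
    intro m
    induction m with
    | zero =>
      intro z _ h0
      rw [pow_zero] at h0
      rw [← mul_one z, h0, mul_zero]
    | succ m ih =>
      intro z hz h0
      have hk : ∀ c : B, z ^ m * c * z = 0 := by
        intro c
        rw [mul_assoc, ← hz c, ← mul_assoc, ← pow_succ, h0, zero_mul]
      rcases hprime _ _ hk with h | h
      · exact ih z hz h
      · exact h
  have hdpow : ∀ z : B, (∀ b : B, z * b = b * z) → ∀ m : ℕ,
      d (z ^ (m + 1)) = (m + 1) • (z ^ m * d z) := by
    intro z hz m
    induction m with
    | zero => simp
    | succ m ih =>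
      have h1 : d (z ^ (m + 1 + 1)) = d (z ^ (m + 1)) * z + z ^ (m + 1) * d z := by
        rw [← hdmul, ← pow_succ]
      have hcm : z ^ m * d z * z = z ^ (m + 1) * d z := by
        rw [mul_assoc, ← hz (d z), ← mul_assoc, ← pow_succ]
      rw [h1, ih, smul_mul_assoc, hcm, ← succ_nsmul]
  have hmulpow : ∀ z : B, (∀ b : B, z * b = b * z) → ∀ (x : B) (m : ℕ),
      (x * z) ^ m = x ^ m * z ^ m := by
    intro z hz x m
    induction m with
    | zero => simp
    | succ m ih =>
      rw [pow_succ, ih, pow_succ, pow_succ, mul_assoc (x ^ m) (z ^ m) (x * z),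
        ← mul_assoc (z ^ m) x z, hcenterpow z hz m x, mul_assoc x (z ^ m) z,
        ← mul_assoc (x ^ m) x (z ^ m * z)]
  have hkey : ∀ z : B, (∀ b : B, z * b = b * z) → ∀ x y b : B,
      ((x ^ p * y ^ q + y ^ q * x ^ p) * b - b * (x ^ p * y ^ q + y ^ q * x ^ p))
        * d (z ^ p) = 0 := by
    intro z hz x y b
    have hzp : ∀ b : B, z ^ p * b = b * z ^ p := hcenterpow z hz p
    have h1 : Psi F p q (x * z) y
        = Psi F p q x y * z ^ p + (x ^ p * y ^ q + y ^ q * x ^ p) * d (z ^ p) := by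
      show F ((x * z) ^ p * y ^ q + y ^ q * (x * z) ^ p)
          + ((x * z) ^ p * y ^ q - y ^ q * (x * z) ^ p) = _
      rw [hmulpow z hz x p]
      have e1 : x ^ p * z ^ p * y ^ q = x ^ p * y ^ q * z ^ p := by
        rw [mul_assoc, hzp (y ^ q), ← mul_assoc]
      have e2 : y ^ q * (x ^ p * z ^ p) = y ^ q * x ^ p * z ^ p := (mul_assoc _ _ _).symm
      rw [e1, e2, ← add_mul, ← sub_mul, hFmul]
      show _ = (F (x ^ p * y ^ q + y ^ q * x ^ p) + (x ^ p * y ^ q - y ^ q * x ^ p)) * z ^ p + _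
      noncomm_ring
    have hc2 : ∀ b' : B, Psi F p q x y * z ^ p * b' = b' * (Psi F p q x y * z ^ p) := by
      intro b'
      rw [mul_assoc, hzp b', ← mul_assoc, hglob x y b', mul_assoc]
    have hEd : ∀ b' : B, (x ^ p * y ^ q + y ^ q * x ^ p) * d (z ^ p) * b'
        = b' * ((x ^ p * y ^ q + y ^ q * x ^ p) * d (z ^ p)) := by
      intro b'
      have he : (x ^ p * y ^ q + y ^ q * x ^ p) * d (z ^ p)
          = Psi F p q (x * z) y - Psi F p q x y * z ^ p := by
        rw [h1, add_sub_cancel_left]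
      rw [he, sub_mul, mul_sub, hglob (x * z) y b', hc2 b']
    have hu : ∀ b' : B, d (z ^ p) * b' = b' * d (z ^ p) := hcenterd _ hzp
    have h6 : (x ^ p * y ^ q + y ^ q * x ^ p) * b * d (z ^ p)
        = b * (x ^ p * y ^ q + y ^ q * x ^ p) * d (z ^ p) := by
      calc (x ^ p * y ^ q + y ^ q * x ^ p) * b * d (z ^ p)
          = (x ^ p * y ^ q + y ^ q * x ^ p) * (b * d (z ^ p)) := mul_assoc _ _ _
        _ = (x ^ p * y ^ q + y ^ q * x ^ p) * (d (z ^ p) * b) := by rw [hu b]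
        _ = (x ^ p * y ^ q + y ^ q * x ^ p) * d (z ^ p) * b := (mul_assoc _ _ _).symm
        _ = b * ((x ^ p * y ^ q + y ^ q * x ^ p) * d (z ^ p)) := hEd b
        _ = b * (x ^ p * y ^ q + y ^ q * x ^ p) * d (z ^ p) := (mul_assoc _ _ _).symm
    rw [sub_mul, h6, sub_self]
  by_cases hcomm : ∀ x y b : B,
      (x ^ p * y ^ q + y ^ q * x ^ p) * b = b * (x ^ p * y ^ q + y ^ q * x ^ p)
  · left
    have hxp : ∀ x b : B, x ^ p * b = b * x ^ p := by
      intro x b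
      have h := hcomm x 1 b
      rw [one_pow, mul_one, one_mul] at h
      have h2 : (2 : ℝ) • (x ^ p * b) = (2 : ℝ) • (b * x ^ p) := by
        rw [two_smul, two_smul, ← add_mul, h, mul_add]
      have h3 : (2 : ℝ) • (x ^ p * b - b * x ^ p) = 0 := by
        rw [smul_sub, h2, sub_self]
      exact sub_eq_zero.mp (hrcancel 2 (by norm_num) _ h3)
    intro x b
    set g : ℕ → B := fun k => x ^ k * (p.choose k : B) * b - b * (x ^ k * (p.choose k : B))
      with hg
    have hsum : ∀ t : ℝ, ∑ j ∈ Finset.range (p + 1), t ^ j • g (p - j) = 0 := by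
      intro t
      have hcx : Commute x (t • (1 : B)) := by
        unfold Commute SemiconjBy
        rw [mul_smul_comm, smul_mul_assoc, mul_one, one_mul]
      have hexp : (x + t • (1 : B)) ^ p
          = ∑ k ∈ Finset.range (p + 1), t ^ (p - k) • (x ^ k * (p.choose k : B)) := by
        rw [hcx.add_pow]
        refine Finset.sum_congr rfl fun k _ => ?_
        rw [smul_pow, one_pow, mul_smul_comm, mul_one, smul_mul_assoc]
      have hterm : ∀ k ∈ Finset.range (p + 1), t ^ (p - k) • g k
          = t ^ (p - k) • (x ^ k * (p.choose k : B)) * b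
            - b * (t ^ (p - k) • (x ^ k * (p.choose k : B))) := by
        intro k _
        simp only [hg]
        rw [smul_sub, smul_mul_assoc, mul_smul_comm]
      have hsub : ∑ k ∈ Finset.range (p + 1), t ^ (p - k) • g k = 0 := by
        calc ∑ k ∈ Finset.range (p + 1), t ^ (p - k) • g k
            = ∑ k ∈ Finset.range (p + 1), (t ^ (p - k) • (x ^ k * (p.choose k : B)) * b
              - b * (t ^ (p - k) • (x ^ k * (p.choose k : B)))) := Finset.sum_congr rfl hterm
          _ = (∑ k ∈ Finset.range (p + 1), t ^ (p - k) • (x ^ k * (p.choose k : B))) * b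
              - b * ∑ k ∈ Finset.range (p + 1), t ^ (p - k) • (x ^ k * (p.choose k : B)) := by
              rw [Finset.sum_sub_distrib, Finset.sum_mul, Finset.mul_sum]
          _ = 0 := by rw [← hexp, hxp (x + t • (1 : B)) b, sub_self]
      have hrefl := Finset.sum_range_reflect (fun j => t ^ j • g (p - j)) (p + 1)
      simp only [Nat.add_sub_cancel] at hrefl
      have hrefl2 : ∑ j ∈ Finset.range (p + 1), t ^ (p - j) • g (p - (p - j))
          = ∑ j ∈ Finset.range (p + 1), t ^ (p - j) • g j :=
        Finset.sum_congr rfl fun j hj => by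
          rw [Nat.sub_sub_self (Nat.lt_succ_iff.mp (Finset.mem_range.1 hj))]
      rw [← hrefl, hrefl2, hsub]
    have hcoef := coeffs_eq_zero (p + 1) (fun j => g (p - j)) 1 one_pos (fun t _ => hsum t)
    have hg1 := hcoef (p - 1) (by omega)
    have hidx : p - (p - 1) = 1 := by omega
    simp only [hidx] at hg1
    simp only [hg, pow_one, Nat.choose_one_right] at hg1
    have e1 : x * (p : B) * b = x * b * (p : B) := by
      rw [mul_assoc, (Nat.cast_commute (p : ℕ) b).eq, ← mul_assoc]
    have e2 : b * (x * (p : B)) = b * x * (p : B) := (mul_assoc _ _ _).symm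
    rw [e1, e2, ← sub_mul] at hg1
    have hcast2 : (x * b - b * x) * (p : B) = (p : ℝ) • (x * b - b * x) := by
      rw [← map_natCast (algebraMap ℝ B) p, Algebra.algebraMap_eq_smul_one, mul_smul_comm,
        mul_one]
    rw [hcast2] at hg1
    exact sub_eq_zero.mp (hrcancel (p : ℝ) (Nat.cast_ne_zero.2 hp.ne') _ hg1)
  · right
    intro z hz
    push_neg at hcomm
    obtain ⟨x₀, y₀, b₀, hne⟩ := hcomm
    have hzp : ∀ b : B, z ^ p * b = b * z ^ p := hcenterpow z hz p
    have hu : ∀ b' : B, d (z ^ p) * b' = b' * d (z ^ p) := hcenterd _ hzp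
    have hA : ∀ c : B, ((x₀ ^ p * y₀ ^ q + y₀ ^ q * x₀ ^ p) * b₀
        - b₀ * (x₀ ^ p * y₀ ^ q + y₀ ^ q * x₀ ^ p)) * c * d (z ^ p) = 0 := by
      intro c
      rw [mul_assoc, ← hu c, ← mul_assoc, hkey z hz x₀ y₀ b₀, zero_mul]
    rcases hprime _ _ hA with h | h
    · exact absurd (sub_eq_zero.mp h) hne
    · obtain ⟨m, rfl⟩ : ∃ m, p = m + 1 := ⟨p - 1, by omega⟩
      have h5 : z ^ m * d z = 0 :=
        hcast (m + 1) (Nat.succ_pos m) _ (by rw [← hdpow z hz m]; exact h)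
      have h6 : ∀ c : B, z ^ m * c * d z = 0 := by
        intro c
        rw [mul_assoc, ← hcenterd z hz c, ← mul_assoc, h5, zero_mul]
      rcases hprime _ _ h6 with h7 | h7
      · rw [hnilz m z hz h7]; exact hd0
      · exact h7

end GenDerAux

/-- Theorem: a prime real Banach algebra with a continuous generalized derivation `F`
associated with a non-injective derivation `d` satisfying
`F(x^p ∘ y^q) + [x^p, y^q] ∈ Z(B)` on a product of nonempty open sets is commutative
or `d` vanishes on the center. -/
theorem prime_banach_of_genDer_anticomm_add_comm
    {B : Type*} [NormedRing B] [NormedAlgebra ℝ B] [CompleteSpace B]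
    (hprime : ∀ x y : B, (∀ z : B, x * z * y = 0) → x = 0 ∨ y = 0)
    (H₁ H₂ : Set B) (hH₁ : H₁.Nonempty) (hH₂ : H₂.Nonempty)
    (hH₁o : IsOpen H₁) (hH₂o : IsOpen H₂)
    (d : B → B) (hdadd : ∀ x y : B, d (x + y) = d x + d y)
    (hdmul : ∀ x y : B, d (x * y) = d x * y + x * d y)
    (hdnoninj : ¬ Function.Injective d)
    (F : B → B) (hFcont : Continuous F)
    (hFadd : ∀ x y : B, F (x + y) = F x + F y)
    (hFmul : ∀ x y : B, F (x * y) = F x * y + x * d y)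
    (hmain : ∀ x ∈ H₁, ∀ y ∈ H₂, ∃ p q : ℕ, 0 < p ∧ 0 < q ∧
      ∀ b : B, (F (x ^ p * y ^ q + y ^ q * x ^ p) + (x ^ p * y ^ q - y ^ q * x ^ p)) * b
        = b * (F (x ^ p * y ^ q + y ^ q * x ^ p) + (x ^ p * y ^ q - y ^ q * x ^ p))) :
    (∀ x y : B, x * y = y * x) ∨ (∀ z : B, (∀ b : B, z * b = b * z) → d z = 0) := by
  obtain ⟨p, q, hp, hq, hglob⟩ :=
    GenDerAux.global_identity H₁ H₂ hH₁ hH₂ hH₁o hH₂o F hFcont hFadd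
      (fun x hx y hy => by
        obtain ⟨p, q, hp, hq, hb⟩ := hmain x hx y hy
        exact ⟨p, q, hp, hq, fun b => by simpa [GenDerAux.Psi] using hb b⟩)
  exact GenDerAux.endgame hprime d hdadd hdmul F hFmul p q hp hglob
end

section
/- Let B be a Banach algebra over ℝ, let H₁ and H₂ be non-empty open subsets of B, and let f : B → B be a continuous automorphism. Suppose that for every (x, y) ∈ H₁ × H₂ there exist positive integers p = p(x,y) ≥ 1 and q = q(x,y) ≥ 1 such that f(xᵖyᵠ) + xᵖ∘yᵠ ∈ Z(B). Then there exist fixed positive integers n ≥ 1 and m ≥ 1 such that f(xⁿyᵐ) + xⁿ∘yᵐ ∈ Z(B) for all x, y ∈ B. -/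
open Metric Set

/-- If a real Banach algebra `B` has a continuous automorphism `f` with
`f(x^p y^q) + x^p ∘ y^q ∈ Z(B)` on a product of nonempty open sets (with `p, q`
depending on `x, y`), then there are fixed `n, m ≥ 1` with
`f(x^n y^m) + x^n ∘ y^m ∈ Z(B)` for all `x, y ∈ B`. -/
theorem banach_auto_identity_globalizes
    {B : Type*} [NormedRing B] [NormedAlgebra ℝ B] [CompleteSpace B]
    (H₁ H₂ : Set B) (hH₁ : H₁.Nonempty) (hH₂ : H₂.Nonempty)
    (hH₁o : IsOpen H₁) (hH₂o : IsOpen H₂)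
    (f : B → B) (hfcont : Continuous f) (hfbij : Function.Bijective f)
    (hfadd : ∀ x y : B, f (x + y) = f x + f y)
    (hfmul : ∀ x y : B, f (x * y) = f x * f y)
    (hmain : ∀ x ∈ H₁, ∀ y ∈ H₂, ∃ p q : ℕ, 0 < p ∧ 0 < q ∧
      ∀ b : B, (f (x ^ p * y ^ q) + (x ^ p * y ^ q + y ^ q * x ^ p)) * b
        = b * (f (x ^ p * y ^ q) + (x ^ p * y ^ q + y ^ q * x ^ p))) :
    ∃ n m : ℕ, 0 < n ∧ 0 < m ∧ ∀ x y : B,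
      ∀ b : B, (f (x ^ n * y ^ m) + (x ^ n * y ^ m + y ^ m * x ^ n)) * b
        = b * (f (x ^ n * y ^ m) + (x ^ n * y ^ m + y ^ m * x ^ n)) := by
  classical
  -- f preserves positive powers
  have hpow : ∀ (x : B) (n : ℕ), f (x ^ (n + 1)) = f x ^ (n + 1) := by
    intro x n
    induction n with
    | zero => simp
    | succ n ih => rw [pow_succ, hfmul, ih, ← pow_succ]
  -- f is a continuous ℝ-linear map
  set L : B →L[ℝ] B := AddMonoidHom.toRealLinearMap (AddMonoidHom.mk' f hfadd) hfcont with hLdef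
  have hL : ∀ x, L x = f x := fun x => rfl
  -- the closed sets
  set A : ℕ × ℕ → Set (B × B) := fun i =>
    {z : B × B | ∀ b : B,
      (f (z.1 ^ (i.1 + 1) * z.2 ^ (i.2 + 1)) + (z.1 ^ (i.1 + 1) * z.2 ^ (i.2 + 1)
        + z.2 ^ (i.2 + 1) * z.1 ^ (i.1 + 1))) * b
      = b * (f (z.1 ^ (i.1 + 1) * z.2 ^ (i.2 + 1)) + (z.1 ^ (i.1 + 1) * z.2 ^ (i.2 + 1)
        + z.2 ^ (i.2 + 1) * z.1 ^ (i.1 + 1)))} with hAdef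
  have hAclosed : ∀ i, IsClosed (A i) := by
    intro i
    have : A i = ⋂ b : B,
        {z : B × B | (f (z.1 ^ (i.1 + 1) * z.2 ^ (i.2 + 1)) + (z.1 ^ (i.1 + 1) * z.2 ^ (i.2 + 1)
          + z.2 ^ (i.2 + 1) * z.1 ^ (i.1 + 1))) * b
        = b * (f (z.1 ^ (i.1 + 1) * z.2 ^ (i.2 + 1)) + (z.1 ^ (i.1 + 1) * z.2 ^ (i.2 + 1)
          + z.2 ^ (i.2 + 1) * z.1 ^ (i.1 + 1)))} := by
      ext z; simp [hAdef, Set.mem_iInter]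
    rw [this]
    exact isClosed_iInter fun b => isClosed_eq (by fun_prop) (by fun_prop)
  obtain ⟨x₀, hx₀⟩ := hH₁
  obtain ⟨y₀, hy₀⟩ := hH₂
  obtain ⟨ε₁, hε₁, hball₁⟩ := Metric.isOpen_iff.1 hH₁o x₀ hx₀
  obtain ⟨ε₂, hε₂, hball₂⟩ := Metric.isOpen_iff.1 hH₂o y₀ hy₀
  have hr₁ : (0 : ℝ) < ε₁ / 2 := by positivity
  have hr₂ : (0 : ℝ) < ε₂ / 2 := by positivity
  have hK₁ : closedBall x₀ (ε₁ / 2) ⊆ H₁ := fun z hz =>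
    hball₁ (lt_of_le_of_lt (mem_closedBall.1 hz) (half_lt_self hε₁))
  have hK₂ : closedBall y₀ (ε₂ / 2) ⊆ H₂ := fun z hz =>
    hball₂ (lt_of_le_of_lt (mem_closedBall.1 hz) (half_lt_self hε₂))
  set K : Set (B × B) := closedBall x₀ (ε₁ / 2) ×ˢ closedBall y₀ (ε₂ / 2) with hKdef
  have hKclosed : IsClosed K := IsClosed.prod Metric.isClosed_closedBall Metric.isClosed_closedBall
  haveI : CompleteSpace K := hKclosed.completeSpace_coe
  haveI : Nonempty K := ⟨⟨(x₀, y₀), ⟨mem_closedBall_self hr₁.le, mem_closedBall_self hr₂.le⟩⟩⟩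
  have hcover : ⋃ i, (Subtype.val ⁻¹' A i : Set K) = univ := by
    ext z
    simp only [mem_iUnion, mem_univ, iff_true, mem_preimage]
    have hz1 : (z : B × B).1 ∈ H₁ := hK₁ z.2.1
    have hz2 : (z : B × B).2 ∈ H₂ := hK₂ z.2.2
    obtain ⟨p, q, hp, hq, h⟩ := hmain _ hz1 _ hz2
    refine ⟨(p - 1, q - 1), ?_⟩
    simpa [hAdef, Nat.sub_add_cancel hp, Nat.sub_add_cancel hq] using h
  obtain ⟨i, z₀, hz₀⟩ := nonempty_interior_of_iUnion_of_closed
    (fun i => (hAclosed i).preimage continuous_subtype_val) hcover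
  obtain ⟨O, hOsub, hOopen, hz₀O⟩ := mem_interior.1 hz₀
  obtain ⟨V, hVopen, hV⟩ := isOpen_induced_iff.1 hOopen
  have hz₀V : (z₀ : B × B) ∈ V := by
    have : z₀ ∈ Subtype.val ⁻¹' V := hV ▸ hz₀O
    exact this
  have hVK : V ∩ K ⊆ A i := by
    intro w hw
    have : (⟨w, hw.2⟩ : K) ∈ O := hV ▸ (hw.1 : (⟨w, hw.2⟩ : K).val ∈ V)
    exact hOsub this
  -- the open ball product is dense in K
  set P : Set (B × B) := ball x₀ (ε₁ / 2) ×ˢ ball y₀ (ε₂ / 2) with hPdef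
  have hPK : P ⊆ K := prod_mono ball_subset_closedBall ball_subset_closedBall
  have hz₀K : (z₀ : B × B) ∈ closure P := by
    rw [hPdef, closure_prod_eq, closure_ball x₀ hr₁.ne', closure_ball y₀ hr₂.ne']
    exact z₀.2
  obtain ⟨w, hwV, hwP⟩ := mem_closure_iff.1 hz₀K V hVopen hz₀V
  obtain ⟨U, V', hUopen, hV'open, hwU, hwV', hUV'⟩ :=
    isOpen_prod_iff.1 (hVopen.inter (isOpen_ball.prod isOpen_ball)) w.1 w.2 ⟨hwV, hwP⟩
  set p := i.1 + 1
  set q := i.2 + 1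
  have hUV : ∀ x ∈ U, ∀ y ∈ V', (x, y) ∈ A i := by
    intro x hx y hy
    have h1 : (x, y) ∈ V ∩ P := hUV' (mk_mem_prod hx hy)
    exact hVK ⟨h1.1, hPK h1.2⟩
  -- the polynomial expression
  set E : B → B → B := fun x y => L x ^ p * L y ^ q + (x ^ p * y ^ q + y ^ q * x ^ p) with hEdef
  have hE : ∀ x y : B, f (x ^ p * y ^ q) + (x ^ p * y ^ q + y ^ q * x ^ p) = E x y := by
    intro x y
    show f (x ^ p * y ^ q) + (x ^ p * y ^ q + y ^ q * x ^ p)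
      = L x ^ p * L y ^ q + (x ^ p * y ^ q + y ^ q * x ^ p)
    rw [hfmul, hpow, hpow, hL, hL]
  have hLa : AnalyticOnNhd ℝ (fun x : B => L x) univ := L.analyticOnNhd univ
  -- step A: fix y ∈ V', extend over all x
  have stepA : ∀ y ∈ V', ∀ (b x : B), E x y * b = b * E x y := by
    intro y hy b
    have h1 : AnalyticOnNhd ℝ (fun x => E x y * b) univ :=
      (((hLa.pow p).mul analyticOnNhd_const).add
        (((analyticOnNhd_id.pow p).mul analyticOnNhd_const).add
          (analyticOnNhd_const.mul (analyticOnNhd_id.pow p)))).mul analyticOnNhd_const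
    have h2 : AnalyticOnNhd ℝ (fun x => b * E x y) univ :=
      analyticOnNhd_const.mul (((hLa.pow p).mul analyticOnNhd_const).add
        (((analyticOnNhd_id.pow p).mul analyticOnNhd_const).add
          (analyticOnNhd_const.mul (analyticOnNhd_id.pow p))))
    have heq : (fun x => E x y * b) =ᶠ[nhds w.1] (fun x => b * E x y) := by
      filter_upwards [hUopen.mem_nhds hwU] with x hx
      have := hUV x hx y hy b
      rwa [hE] at this
    have := AnalyticOnNhd.eq_of_eventuallyEq h1 h2 heq
    exact fun x => congrFun this x
  -- step B: extend over all y
  have stepB : ∀ (x b y : B), E x y * b = b * E x y := by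
    intro x b
    have h1 : AnalyticOnNhd ℝ (fun y => E x y * b) univ :=
      ((analyticOnNhd_const.mul (hLa.pow q)).add
        ((analyticOnNhd_const.mul (analyticOnNhd_id.pow q)).add
          ((analyticOnNhd_id.pow q).mul analyticOnNhd_const))).mul analyticOnNhd_const
    have h2 : AnalyticOnNhd ℝ (fun y => b * E x y) univ :=
      analyticOnNhd_const.mul ((analyticOnNhd_const.mul (hLa.pow q)).add
        ((analyticOnNhd_const.mul (analyticOnNhd_id.pow q)).add
          ((analyticOnNhd_id.pow q).mul analyticOnNhd_const)))
    have heq : (fun y => E x y * b) =ᶠ[nhds w.2] (fun y => b * E x y) := by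
      filter_upwards [hV'open.mem_nhds hwV'] with y hy
      exact stepA y hy b x
    have := AnalyticOnNhd.eq_of_eventuallyEq h1 h2 heq
    exact fun y => congrFun this y
  refine ⟨p, q, Nat.succ_pos _, Nat.succ_pos _, fun x y b => ?_⟩
  rw [hE]
  exact stepB x b y
end

section
/- Let B be a Banach algebra over ℝ and let f : B → B be an automorphism. Suppose there exist positive integers n ≥ 1 and m ≥ 1 such that f(xⁿyᵐ) + xⁿ∘yᵐ ∈ Z(B) for all x, y ∈ B. Then f([x^{nm}, y^{nm}]) ∈ Z(B) for all x, y ∈ B. -/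
/-- If an automorphism `f` of a real Banach algebra satisfies
`f(x^n y^m) + x^n ∘ y^m ∈ Z(B)` for all `x, y` (fixed `n, m ≥ 1`), then
`f([x^(nm), y^(nm)]) ∈ Z(B)` for all `x, y`. -/
theorem banach_auto_comm_power_central
    {B : Type*} [NormedRing B] [NormedAlgebra ℝ B] [CompleteSpace B]
    (f : B → B) (hfbij : Function.Bijective f)
    (hfadd : ∀ x y : B, f (x + y) = f x + f y)
    (hfmul : ∀ x y : B, f (x * y) = f x * f y)
    (n m : ℕ) (hn : 0 < n) (hm : 0 < m)
    (hmain : ∀ x y : B,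
      ∀ b : B, (f (x ^ n * y ^ m) + (x ^ n * y ^ m + y ^ m * x ^ n)) * b
        = b * (f (x ^ n * y ^ m) + (x ^ n * y ^ m + y ^ m * x ^ n))) :
    ∀ x y : B, ∀ b : B,
      f (x ^ (n * m) * y ^ (n * m) - y ^ (n * m) * x ^ (n * m)) * b
        = b * f (x ^ (n * m) * y ^ (n * m) - y ^ (n * m) * x ^ (n * m)) := by
  have hsub : ∀ u v : B, f (u - v) = f u - f v := by
    intro u v
    have h : f (u - v) + f v = f u := by
      rw [← hfadd, sub_add_cancel]
    exact eq_sub_of_add_eq h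
  intro x y b
  have h1 := hmain (x ^ m) (y ^ n) b
  have h2 := hmain (y ^ m) (x ^ n) b
  rw [← pow_mul, ← pow_mul, Nat.mul_comm m n] at h1 h2
  set A := x ^ (n * m) with hA
  set C := y ^ (n * m) with hC
  calc f (A * C - C * A) * b
      = (f (A * C) + (A * C + C * A)) * b
        - (f (C * A) + (C * A + A * C)) * b := by
          rw [hsub]; noncomm_ring
    _ = b * (f (A * C) + (A * C + C * A))
        - b * (f (C * A) + (C * A + A * C)) := by rw [h1, h2]
    _ = b * f (A * C - C * A) := by rw [hsub]; noncomm_ring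
end

section
/- Let B be a Banach algebra over ℝ, let F : B → B be a continuous ℝ-linear map, and let p ≥ 1 be a positive integer. If F([xᵖ, yᵖ]) ∈ Z(B) for all x, y ∈ B, then F([x^{p²}, y]) ∈ Z(B) for all x, y ∈ B. -/
open Finset Polynomial

-- auxiliary: polynomial coefficient extraction in a normed space
lemma aux_coeff_zero {B : Type*} [NormedRing B] [NormedAlgebra ℝ B]
    (n : ℕ) (g : ℕ → B) (h : ∀ t : ℝ, ∑ k ∈ Finset.range n, t ^ k • g k = 0) :
    ∀ k, k < n → g k = 0 := by
  intro k hk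
  apply NormedSpace.eq_zero_of_forall_dual_eq_zero ℝ
  intro φ
  have hq : (∑ j ∈ Finset.range n, Polynomial.C (φ (g j)) * Polynomial.X ^ j) = 0 := by
    apply Polynomial.funext
    intro t
    simp only [Polynomial.eval_finset_sum, Polynomial.eval_mul, Polynomial.eval_C,
      Polynomial.eval_pow, Polynomial.eval_X, Polynomial.eval_zero]
    have := congrArg φ (h t)
    simpa [map_sum, mul_comm] using this
  have := congrArg (fun q => Polynomial.coeff q k) hq
  simpa [Polynomial.finset_sum_coeff, Polynomial.coeff_C_mul, Polynomial.coeff_X_pow,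
    Finset.sum_ite_eq', hk] using this

/-- If a continuous `ℝ`-linear map `F` on a real Banach algebra satisfies
`F([x^p, y^p]) ∈ Z(B)` for all `x, y` (fixed `p ≥ 1`), then
`F([x^(p²), y]) ∈ Z(B)` for all `x, y`. -/
theorem banach_linear_comm_power_central
    {B : Type*} [NormedRing B] [NormedAlgebra ℝ B] [CompleteSpace B]
    (F : B →L[ℝ] B) (p : ℕ) (hp : 0 < p)
    (hmain : ∀ x y : B, ∀ b : B,
      F (x ^ p * y ^ p - y ^ p * x ^ p) * b = b * F (x ^ p * y ^ p - y ^ p * x ^ p)) :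
    ∀ x y : B, ∀ b : B,
      F (x ^ (p ^ 2) * y - y * x ^ (p ^ 2)) * b = b * F (x ^ (p ^ 2) * y - y * x ^ (p ^ 2)) := by
  have step1 : ∀ x y : B, ∀ b : B,
      F (x ^ p * y - y * x ^ p) * b = b * F (x ^ p * y - y * x ^ p) := by
    intro x y b
    set g : ℕ → B := fun k =>
      (p.choose k : ℝ) • (F (x ^ p * y ^ k - y ^ k * x ^ p) * b
        - b * F (x ^ p * y ^ k - y ^ k * x ^ p)) with hg
    have key : ∀ t : ℝ, ∑ k ∈ Finset.range (p + 1), t ^ k • g k = 0 := by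
      intro t
      have hpow : ((1 : B) + t • y) ^ p
          = ∑ k ∈ Finset.range (p + 1), t ^ k • ((p.choose k : ℝ) • y ^ k) := by
        rw [add_comm, (Commute.one_right (t • y)).add_pow]
        refine Finset.sum_congr rfl fun k _ => ?_
        rw [_root_.smul_pow, one_pow, mul_one, smul_mul_assoc]
        congr 1
        rw [Algebra.smul_def, map_natCast]
        exact (Nat.cast_commute (p.choose k) (y ^ k)).symm.eq
      have h := hmain x (1 + t • y) b
      rw [hpow] at h
      have hS : x ^ p * (∑ k ∈ Finset.range (p + 1), t ^ k • ((p.choose k : ℝ) • y ^ k))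
          - (∑ k ∈ Finset.range (p + 1), t ^ k • ((p.choose k : ℝ) • y ^ k)) * x ^ p
          = ∑ k ∈ Finset.range (p + 1),
              t ^ k • ((p.choose k : ℝ) • (x ^ p * y ^ k - y ^ k * x ^ p)) := by
        simp [Finset.mul_sum, Finset.sum_mul, ← Finset.sum_sub_distrib,
          mul_smul_comm, smul_mul_assoc, smul_sub]
      rw [hS, map_sum] at h
      simp only [map_smul] at h
      have hgoal : ∑ k ∈ Finset.range (p + 1), t ^ k • g k
          = ∑ k ∈ Finset.range (p + 1),
              ((t ^ k • ((p.choose k : ℝ) • F (x ^ p * y ^ k - y ^ k * x ^ p))) * b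
                - b * (t ^ k • ((p.choose k : ℝ) • F (x ^ p * y ^ k - y ^ k * x ^ p)))) :=
        Finset.sum_congr rfl fun k _ => by
          simp [hg, smul_sub, mul_smul_comm, smul_mul_assoc, sub_mul, mul_sub]
      rw [hgoal, Finset.sum_sub_distrib, ← Finset.sum_mul, ← Finset.mul_sum, h, sub_self]
    have h1 := aux_coeff_zero (p + 1) g key 1 (by omega)
    rw [hg] at h1
    simp only [Nat.choose_one_right, pow_one] at h1
    have hp' : (p : ℝ) ≠ 0 := Nat.cast_ne_zero.mpr hp.ne'
    rcases smul_eq_zero.mp h1 with h | h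
    · exact absurd h hp'
    · exact sub_eq_zero.mp h
  intro x y b
  have := step1 (x ^ p) y b
  rwa [← pow_mul, ← sq] at this
end

section
/- Let B be a prime Banach algebra over ℝ, let d : B → B be a derivation, and let F : B → B be a generalized derivation associated with d. Suppose that F([x, y]) ∈ Z(B) for all x, y ∈ B and that d(Z(B)) ≠ {0}, i.e., there exists z ∈ Z(B) with d(z) ≠ 0. Then B is commutative. -/
/-- If a prime real Banach algebra has a generalized derivation `F` (associated with a
derivation `d`) with `F([x, y]) ∈ Z(B)` for all `x, y`, and `d` does not vanish on the
center, then the algebra is commutative. -/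
theorem prime_banach_comm_of_genDer_comm_central
    {B : Type*} [NormedRing B] [NormedAlgebra ℝ B] [CompleteSpace B]
    (hprime : ∀ x y : B, (∀ z : B, x * z * y = 0) → x = 0 ∨ y = 0)
    (d : B → B) (hdadd : ∀ x y : B, d (x + y) = d x + d y)
    (hdmul : ∀ x y : B, d (x * y) = d x * y + x * d y)
    (F : B → B) (hFadd : ∀ x y : B, F (x + y) = F x + F y)
    (hFmul : ∀ x y : B, F (x * y) = F x * y + x * d y)
    (hmain : ∀ x y : B, ∀ b : B,
      F (x * y - y * x) * b = b * F (x * y - y * x))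
    (hd : ∃ z : B, (∀ b : B, z * b = b * z) ∧ d z ≠ 0) :
    ∀ x y : B, x * y = y * x := by
  obtain ⟨z, hz, hdz⟩ := hd
  -- d z is central
  have hc : ∀ b : B, d z * b = b * d z := by
    intro b
    have e : d (z * b) = d (b * z) := by rw [hz b]
    rw [hdmul, hdmul, hz (d b)] at e
    -- e : d z * b + d b * z = d b * z + b * d z
    have e2 : d z * b + d b * z = b * d z + d b * z := by
      rw [e]; exact add_comm _ _
    exact add_right_cancel e2
  -- [x,y] * d z is central
  have huc : ∀ x y b : B, (x*y - y*x) * d z * b = b * ((x*y - y*x) * d z) := by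
    intro x y b
    have h1 : (x*z)*y - y*(x*z) = (x*y - y*x)*z := by
      rw [mul_assoc x z y, hz y, ← mul_assoc x y z, ← mul_assoc y x z, sub_mul]
    have h2 := hmain (x*z) y b
    rw [h1, hFmul] at h2
    have h3 := hmain x y
    have h4 : F (x*y-y*x) * z * b = b * (F (x*y-y*x) * z) := by
      rw [mul_assoc, hz b, ← mul_assoc, h3 b, mul_assoc]
    rw [add_mul, mul_add, h4] at h2
    exact add_left_cancel h2
  -- [x,y] is central
  have hu : ∀ x y b : B, (x*y - y*x) * b = b * (x*y - y*x) := by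
    intro x y b
    have h0 : ((x*y-y*x)*b - b*(x*y-y*x)) * d z = 0 := by
      have e1 : (x*y-y*x)*b*(d z) = (x*y-y*x)*(d z)*b := by
        rw [mul_assoc, ← hc b, ← mul_assoc]
      rw [sub_mul, e1, huc x y b, ← mul_assoc, sub_self]
    have key : ∀ w : B, ((x*y-y*x)*b - b*(x*y-y*x)) * w * d z = 0 := by
      intro w
      rw [mul_assoc, ← hc w, ← mul_assoc, h0, zero_mul]
    rcases hprime _ _ key with h | h
    · exact sub_eq_zero.mp h
    · exact absurd h hdz
  intro x y
  have h0 : (x*y - y*x) * (x*y - y*x) = 0 := by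
    have h1 := hu x (x*y) y
    have e : x*(x*y) - (x*y)*x = x*(x*y - y*x) := by
      rw [mul_sub, mul_assoc]
    rw [e] at h1
    have h2 := hu x y y
    have h3 : (x*y)*(x*y-y*x) = (y*x)*(x*y-y*x) := by
      calc (x*y)*(x*y-y*x) = x*((x*y-y*x)*y) := by rw [mul_assoc, h2]
        _ = (x*(x*y-y*x))*y := by rw [mul_assoc]
        _ = y*(x*(x*y-y*x)) := h1
        _ = (y*x)*(x*y-y*x) := by rw [mul_assoc]
    rw [sub_mul, h3, sub_self]
  have key : ∀ w : B, (x*y - y*x) * w * (x*y - y*x) = 0 := by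
    intro w
    rw [hu x y w, mul_assoc, h0, mul_zero]
  rcases hprime _ _ key with h | h <;> exact sub_eq_zero.mp h
end
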